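/- arXiv:2501.06627 — 7 statements merged into one kernel-verified Lean document; each statement's English description precedes it below -/
import Mathlib

section
/- Let g: ℝ → ℝ be nondecreasing and left-continuous. For every countable family of half-open intervals {[aₙ, bₙ)}ₙ∈ℕ with aₙ < bₙ, there exists a countable pairwise disjoint family {[cₙ, dₙ)}ₙ∈ℕ of half-open intervals such that ⋃ₙ [aₙ, bₙ) = ⋃ₙ [cₙ, dₙ) and ∑ₙ (g(dₙ) − g(cₙ)) ≤ ∑ₙ (g(bₙ) − g(aₙ)). -/
open Set

noncomputable section

/-- The half-open interval associated to a pair. -/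
def sIco (p : ℝ × ℝ) : Set ℝ := Set.Ico p.1 p.2

/-- Pieces of `I` after removing `Ico J.1 J.2`. -/
def cutP (J I : ℝ × ℝ) : List (ℝ × ℝ) := [(I.1, min I.2 J.1), (max I.1 J.2, I.2)]

def cutL (J : ℝ × ℝ) (L : List (ℝ × ℝ)) : List (ℝ × ℝ) := L.flatMap (cutP J)

def LU (L : List (ℝ × ℝ)) : Set ℝ := ⋃ p ∈ L, sIco p

lemma sIco_cut_subset {J I q : ℝ × ℝ} (h : q ∈ cutP J I) : sIco q ⊆ sIco I := by
  simp only [cutP, List.mem_cons, List.mem_singleton, List.not_mem_nil, or_false] at h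
  rcases h with rfl | rfl
  · exact Set.Ico_subset_Ico le_rfl (min_le_left _ _)
  · exact Set.Ico_subset_Ico (le_max_left _ _) le_rfl

lemma LU_cutP (J I : ℝ × ℝ) : LU (cutP J I) = sIco I \ sIco J := by
  simp only [LU, cutP, List.mem_cons, List.mem_singleton, List.not_mem_nil, or_false,
    Set.iUnion_iUnion_eq_or_left, Set.iUnion_iUnion_eq_left, sIco]
  ext x
  simp only [Set.mem_union, Set.mem_Ico, Set.mem_diff, lt_min_iff, max_le_iff, not_and, not_lt]
  constructor
  · rintro (⟨h1, h2, h3⟩ | ⟨⟨h1, h2⟩, h3⟩)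
    · exact ⟨⟨h1, h2⟩, fun h => absurd h3 (not_lt.2 h)⟩
    · exact ⟨⟨h1, h3⟩, fun _ => h2⟩
  · rintro ⟨⟨h1, h2⟩, h3⟩
    by_cases hx : x < J.1
    · exact Or.inl ⟨h1, h2, hx⟩
    · exact Or.inr ⟨⟨h1, h3 (not_lt.1 hx)⟩, h2⟩

lemma LU_cutL (J : ℝ × ℝ) (L : List (ℝ × ℝ)) : LU (cutL J L) = LU L \ sIco J := by
  induction L with
  | nil => simp [LU, cutL]
  | cons p L ih =>
      have : cutL J (p :: L) = cutP J p ++ cutL J L := by simp [cutL]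
      rw [this]
      have happ : LU (cutP J p ++ cutL J L) = LU (cutP J p) ∪ LU (cutL J L) := by
        simp [LU, List.mem_append, Set.iUnion_or, Set.iUnion_union_distrib]
      have hcons : LU (p :: L) = sIco p ∪ LU L := by
        simp [LU, List.mem_cons, Set.iUnion_or, Set.iUnion_union_distrib,
          Set.iUnion_iUnion_eq_left]
      rw [happ, hcons, LU_cutP, ih, Set.union_diff_distrib]

lemma cutL_subset {J q : ℝ × ℝ} {L : List (ℝ × ℝ)} (h : q ∈ cutL J L) :
    ∃ p ∈ L, sIco q ⊆ sIco p := by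
  simp only [cutL, List.mem_flatMap] at h
  obtain ⟨p, hp, hq⟩ := h
  exact ⟨p, hp, sIco_cut_subset hq⟩

lemma cutP_pairwise {J I : ℝ × ℝ} (hJ : J.1 < J.2) :
    List.Pairwise (fun p q => Disjoint (sIco p) (sIco q)) (cutP J I) := by
  refine List.pairwise_cons.2 ⟨?_, List.pairwise_singleton _ _⟩
  intro q hq
  simp only [List.mem_singleton] at hq
  subst hq
  simp only [sIco]
  rw [Set.Ico_disjoint_Ico]
  exact le_trans (min_le_left _ _) (le_trans (min_le_right _ _) (le_trans hJ.le (le_trans (le_max_right _ _) (le_max_right _ _))))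

lemma cutL_pairwise {J : ℝ × ℝ} (hJ : J.1 < J.2) {L : List (ℝ × ℝ)}
    (hL : List.Pairwise (fun p q => Disjoint (sIco p) (sIco q)) L) :
    List.Pairwise (fun p q => Disjoint (sIco p) (sIco q)) (cutL J L) := by
  induction L with
  | nil => simp [cutL]
  | cons p L ih =>
      have : cutL J (p :: L) = cutP J p ++ cutL J L := by simp [cutL]
      rw [this]
      rw [List.pairwise_cons] at hL
      refine List.pairwise_append.2 ⟨cutP_pairwise hJ, ih hL.2, ?_⟩
      intro x hx y hy
      obtain ⟨q, hq, hsub⟩ := cutL_subset hy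
      exact ((hL.1 q hq).mono (sIco_cut_subset hx) hsub)

variable {a b : ℕ → ℝ}

/-- The pieces of interval `n` after removing all earlier intervals. -/
def pcs (a b : ℕ → ℝ) (n : ℕ) : List (ℝ × ℝ) :=
  (List.range n).foldl (fun L m => cutL (a m, b m) L) [(a n, b n)]

lemma LU_foldl (L0 : List (ℝ × ℝ)) (k : ℕ) :
    LU ((List.range k).foldl (fun L m => cutL (a m, b m) L) L0) =
      LU L0 \ ⋃ m < k, Set.Ico (a m) (b m) := by
  induction k with
  | zero => simp
  | succ k ih =>
      rw [List.range_succ, List.foldl_append, List.foldl_cons, List.foldl_nil, LU_cutL, ih,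
        Set.biUnion_lt_succ, Set.diff_diff]
      rfl

lemma LU_pcs (n : ℕ) :
    LU (pcs a b n) = Set.Ico (a n) (b n) \ ⋃ m < n, Set.Ico (a m) (b m) := by
  rw [pcs, LU_foldl]
  congr 1
  simp [LU, sIco, Set.iUnion_iUnion_eq_left]

lemma pcs_pairwise (hab : ∀ n, a n < b n) (n : ℕ) :
    List.Pairwise (fun p q => Disjoint (sIco p) (sIco q)) (pcs a b n) := by
  rw [pcs]
  have : ∀ (L0 : List (ℝ × ℝ)), List.Pairwise (fun p q => Disjoint (sIco p) (sIco q)) L0 →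
      ∀ k, List.Pairwise (fun p q => Disjoint (sIco p) (sIco q))
        ((List.range k).foldl (fun L m => cutL (a m, b m) L) L0) := by
    intro L0 h0 k
    induction k with
    | zero => simpa
    | succ k ih =>
        rw [List.range_succ, List.foldl_append, List.foldl_cons, List.foldl_nil]
        exact cutL_pairwise (hab k) ih
  exact this _ (List.pairwise_singleton _ _) n

lemma mem_pcs_subset {n : ℕ} {p : ℝ × ℝ} (hp : p ∈ pcs a b n) : sIco p ⊆ LU (pcs a b n) := by
  intro x hx
  exact Set.mem_biUnion hp hx

/-- Reserve intervals: a splitting of `[a 0, b 0)` into countably many pieces. -/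
def resv (a b : ℕ → ℝ) (j : ℕ) : ℝ × ℝ :=
  (b 0 - (b 0 - a 0) / 2 ^ j, b 0 - (b 0 - a 0) / 2 ^ (j + 1))

lemma resv_lt (h : a 0 < b 0) (j : ℕ) : (resv a b j).1 < (resv a b j).2 := by
  have h2 : (0:ℝ) < 2 ^ j := by positivity
  have : (b 0 - a 0) / 2 ^ (j + 1) < (b 0 - a 0) / 2 ^ j := by
    apply div_lt_div_of_pos_left (by linarith) h2
    rw [pow_succ]; linarith
  simp only [resv]; linarith

lemma resv_le {i j : ℕ} (hij : i < j) (h : a 0 < b 0) :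
    (resv a b i).2 ≤ (resv a b j).1 := by
  have : (b 0 - a 0) / 2 ^ j ≤ (b 0 - a 0) / 2 ^ (i + 1) := by
    gcongr
    · linarith
    · omega
  simp only [resv]; linarith

lemma resv_disjoint {i j : ℕ} (hij : i ≠ j) (h : a 0 < b 0) :
    Disjoint (sIco (resv a b i)) (sIco (resv a b j)) := by
  rcases hij.lt_or_gt with hl | hl
  · exact Set.Ico_disjoint_Ico.2 (le_trans (min_le_left _ _)
      (le_trans (resv_le hl h) (le_max_right _ _)))
  · exact Set.Ico_disjoint_Ico.2 (le_trans (min_le_right _ _)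
      (le_trans (resv_le hl h) (le_max_left _ _)))

lemma resv_subset (h : a 0 < b 0) (j : ℕ) : sIco (resv a b j) ⊆ Set.Ico (a 0) (b 0) := by
  have h1 : a 0 ≤ (resv a b j).1 := by
    have : (b 0 - a 0) / 2 ^ j ≤ b 0 - a 0 := by
      apply div_le_self (by linarith)
      exact one_le_pow₀ one_le_two
    simp only [resv]; linarith
  have h2 : (resv a b j).2 ≤ b 0 := by
    have : (0:ℝ) < (b 0 - a 0) / 2 ^ (j + 1) := div_pos (by linarith) (by positivity)
    simp only [resv]; linarith
  exact Set.Ico_subset_Ico h1 h2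

lemma resv_union (h : a 0 < b 0) : ⋃ j, sIco (resv a b j) = Set.Ico (a 0) (b 0) := by
  apply Set.Subset.antisymm
  · exact Set.iUnion_subset (resv_subset h)
  · intro x hx
    obtain ⟨hx1, hx2⟩ := hx
    have hbx : 0 < b 0 - x := by linarith
    have hex : ∃ j : ℕ, x < (resv a b j).2 := by
      obtain ⟨n, hn⟩ := pow_unbounded_of_one_lt ((b 0 - a 0) / (b 0 - x)) (one_lt_two (α := ℝ))
      refine ⟨n, ?_⟩
      have h2n : (0:ℝ) < 2 ^ (n+1) := by positivity
      have hlt : (b 0 - a 0) / 2 ^ (n + 1) < b 0 - x := by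
        rw [div_lt_iff₀ h2n]
        rw [div_lt_iff₀ hbx] at hn
        have : (2:ℝ) ^ n ≤ 2 ^ (n+1) := by
          apply pow_le_pow_right₀ one_le_two; omega
        nlinarith
      simp only [resv]; linarith
    refine Set.mem_iUnion.2 ⟨Nat.find hex, ?_, Nat.find_spec hex⟩
    rcases Nat.eq_zero_or_eq_succ_pred (Nat.find hex) with h0 | hsucc
    · rw [h0]
      simpa [resv] using hx1
    · rw [hsucc]
      have hnot := Nat.find_min hex (m := Nat.find hex - 1) (by omega)
      push_neg at hnot
      calc (resv a b (Nat.find hex - 1 + 1)).1 = (resv a b (Nat.find hex - 1)).2 := by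
            simp [resv]
        _ ≤ x := hnot

open Classical in
/-- Candidate piece for global index `k = pair n i`: the `i`-th nonempty piece of
interval `n+1`, if any. -/
def Qc (a b : ℕ → ℝ) (k : ℕ) : Option (ℝ × ℝ) :=
  match (pcs a b ((Nat.unpair k).1 + 1))[(Nat.unpair k).2]? with
  | some p => if p.1 < p.2 then some p else none
  | none => none

open Classical in
noncomputable def FF (a b : ℕ → ℝ) (k : ℕ) : ℝ × ℝ :=
  match Qc a b k with
  | some p => p
  | none => resv a b (Nat.count (fun j => Qc a b j = none) k)

lemma Qc_eq_some {k : ℕ} {p : ℝ × ℝ} (h : Qc a b k = some p) :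
    (pcs a b ((Nat.unpair k).1 + 1))[(Nat.unpair k).2]? = some p ∧ p.1 < p.2 := by
  unfold Qc at h
  split at h
  · split at h
    · cases h
      exact ⟨by assumption, by assumption⟩
    · exact absurd h (by simp)
  · exact absurd h (by simp)

lemma Qc_none_infinite : {k : ℕ | Qc a b k = none}.Infinite := by
  apply Set.infinite_of_injective_forall_mem
    (f := fun n : ℕ => Nat.pair n (pcs a b (n + 1)).length)
  · intro m n hmn
    have := congrArg (fun k => (Nat.unpair k).1) hmn
    simpa [Nat.unpair_pair] using this
  · intro n
    simp only [Set.mem_setOf_eq, Qc, Nat.unpair_pair]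
    rw [List.getElem?_eq_none le_rfl]

lemma LU_pcs_zero : LU (pcs a b 0) = Set.Ico (a 0) (b 0) := by
  rw [LU_pcs]; simp

lemma LU_pcs_disjoint' {m n : ℕ} (h : m < n) :
    Disjoint (LU (pcs a b m)) (LU (pcs a b n)) := by
  rw [LU_pcs, LU_pcs]
  have h1 : Set.Ico (a m) (b m) ⊆ ⋃ j, ⋃ (_ : j < n), Set.Ico (a j) (b j) :=
    fun x hx => Set.mem_biUnion h hx
  exact (Set.disjoint_sdiff_right).mono_left (Set.diff_subset.trans h1)

lemma LU_pcs_disjoint {m n : ℕ} (h : m ≠ n) :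
    Disjoint (LU (pcs a b m)) (LU (pcs a b n)) := by
  rcases h.lt_or_gt with hl | hl
  · exact LU_pcs_disjoint' hl
  · exact (LU_pcs_disjoint' hl).symm

lemma union_LU_pcs : ⋃ n, LU (pcs a b n) = ⋃ n, Set.Ico (a n) (b n) := by
  apply Set.Subset.antisymm
  · refine Set.iUnion_subset fun n => ?_
    rw [LU_pcs]
    exact Set.diff_subset.trans (Set.subset_iUnion (fun n => Set.Ico (a n) (b n)) n)
  · intro x hx
    have hex : ∃ n, x ∈ Set.Ico (a n) (b n) := Set.mem_iUnion.1 hx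
    refine Set.mem_iUnion.2 ⟨Nat.find hex, ?_⟩
    rw [LU_pcs]
    refine ⟨Nat.find_spec hex, ?_⟩
    intro hmem
    obtain ⟨m, hm⟩ := Set.mem_iUnion.1 hmem
    obtain ⟨hmn, hxm⟩ := Set.mem_iUnion.1 hm
    exact Nat.find_min hex hmn hxm

open Classical in
lemma FF_of_some {k : ℕ} {p : ℝ × ℝ} (h : Qc a b k = some p) : FF a b k = p := by
  unfold FF; rw [h]

open Classical in
lemma FF_of_none {k : ℕ} (h : Qc a b k = none) :
    FF a b k = resv a b (Nat.count (fun j => Qc a b j = none) k) := by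
  unfold FF; rw [h]

lemma Qc_some_data {k : ℕ} {p : ℝ × ℝ} (h : Qc a b k = some p) :
    ∃ hi : (Nat.unpair k).2 < (pcs a b ((Nat.unpair k).1 + 1)).length,
      (pcs a b ((Nat.unpair k).1 + 1))[(Nat.unpair k).2] = p ∧ p.1 < p.2 := by
  obtain ⟨h1, h2⟩ := Qc_eq_some h
  rw [List.getElem?_eq_some_iff] at h1
  obtain ⟨hi, hp⟩ := h1
  exact ⟨hi, hp, h2⟩

lemma sIco_FF_some_subset {k : ℕ} {p : ℝ × ℝ} (h : Qc a b k = some p) :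
    sIco p ⊆ LU (pcs a b ((Nat.unpair k).1 + 1)) := by
  obtain ⟨hi, hp, _⟩ := Qc_some_data h
  exact mem_pcs_subset (hp ▸ List.getElem_mem hi)

lemma FF_disjoint (hab : ∀ n, a n < b n) :
    Pairwise fun k l => Disjoint (sIco (FF a b k)) (sIco (FF a b l)) := by
  classical
  intro k l hkl
  rcases hqk : Qc a b k with _ | p <;> rcases hql : Qc a b l with _ | q
  · -- both none : distinct reserve intervals
    rw [FF_of_none hqk, FF_of_none hql]
    refine resv_disjoint ?_ (hab 0)
    rcases hkl.lt_or_gt with hl | hl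
    · exact ne_of_lt (Nat.count_strict_mono hqk hl)
    · exact (ne_of_lt (Nat.count_strict_mono hql hl)).symm
  · -- k none, l some
    rw [FF_of_none hqk, FF_of_some hql]
    refine Disjoint.mono ?_ (sIco_FF_some_subset hql)
      ((LU_pcs_disjoint (Nat.succ_ne_zero _).symm))
    exact (resv_subset (hab 0) _).trans (le_of_eq LU_pcs_zero.symm)
  · -- k some, l none
    rw [FF_of_some hqk, FF_of_none hql]
    refine Disjoint.mono (sIco_FF_some_subset hqk) ?_
      ((LU_pcs_disjoint (Nat.succ_ne_zero _)))
    exact (resv_subset (hab 0) _).trans (le_of_eq LU_pcs_zero.symm)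
  · -- both some
    rw [FF_of_some hqk, FF_of_some hql]
    by_cases hn : (Nat.unpair k).1 = (Nat.unpair l).1
    · -- same interval, different pieces
      have hne : (Nat.unpair k).2 ≠ (Nat.unpair l).2 := by
        intro h2
        apply hkl
        rw [← Nat.pair_unpair k, ← Nat.pair_unpair l, hn, h2]
      obtain ⟨h1, _⟩ := Qc_eq_some hqk
      obtain ⟨h2, _⟩ := Qc_eq_some hql
      rw [hn] at h1
      rw [List.getElem?_eq_some_iff] at h1 h2
      obtain ⟨hi, hpi⟩ := h1
      obtain ⟨hj, hpj⟩ := h2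
      have hpw := List.pairwise_iff_getElem.1 (pcs_pairwise hab ((Nat.unpair l).1 + 1))
      rcases hne.lt_or_gt with hl | hl
      · have := hpw _ _ hi hj hl
        rwa [hpi, hpj] at this
      · have := hpw _ _ hj hi hl
        rw [hpi, hpj] at this
        exact this.symm
    · exact Disjoint.mono (sIco_FF_some_subset hqk) (sIco_FF_some_subset hql)
        (LU_pcs_disjoint (by omega))

lemma FF_union (hab : ∀ n, a n < b n) :
    ⋃ k, sIco (FF a b k) = ⋃ n, Set.Ico (a n) (b n) := by
  classical
  rw [← union_LU_pcs]
  apply Set.Subset.antisymm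
  · refine Set.iUnion_subset fun k => ?_
    rcases hq : Qc a b k with _ | p
    · rw [FF_of_none hq]
      refine ((resv_subset (hab 0) _).trans ?_).trans (Set.subset_iUnion _ 0)
      exact le_of_eq LU_pcs_zero.symm
    · rw [FF_of_some hq]
      exact (sIco_FF_some_subset hq).trans (Set.subset_iUnion (fun n => LU (pcs a b n)) _)
  · refine Set.iUnion_subset fun n => ?_
    match n with
    | 0 =>
      rw [LU_pcs_zero, ← resv_union (hab 0)]
      refine Set.iUnion_subset fun j => ?_
      intro x hx
      have hinf : {k | Qc a b k = none}.Infinite := Qc_none_infinite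
      refine Set.mem_iUnion.2 ⟨Nat.nth (fun j => Qc a b j = none) j, ?_⟩
      have h1 : Qc a b (Nat.nth (fun j => Qc a b j = none) j) = none :=
        Nat.nth_mem_of_infinite hinf j
      rw [FF_of_none h1, Nat.count_nth_of_infinite hinf j]
      exact hx
    | m + 1 =>
      intro x hx
      obtain ⟨p, hp, hxp⟩ := Set.mem_iUnion₂.1 hx
      obtain ⟨i, hi, hpi⟩ := List.mem_iff_getElem.1 hp
      have hlt : p.1 < p.2 := lt_of_le_of_lt hxp.1 hxp.2
      refine Set.mem_iUnion.2 ⟨Nat.pair m i, ?_⟩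
      have hq : Qc a b (Nat.pair m i) = some p := by
        unfold Qc
        rw [Nat.unpair_pair]
        simp only
        rw [List.getElem?_eq_getElem hi, hpi]
        simp [hlt]
      rw [FF_of_some hq]
      exact hxp

lemma FF_lt (hab : ∀ n, a n < b n) (k : ℕ) : (FF a b k).1 < (FF a b k).2 := by
  rcases hq : Qc a b k with _ | p
  · rw [FF_of_none hq]
    exact resv_lt (hab 0) _
  · rw [FF_of_some hq]
    exact (Qc_eq_some hq).2

end

/-- Left-continuity of `g` at every point. -/
def LeftCont (g : ℝ → ℝ) : Prop := ∀ t : ℝ, ContinuousWithinAt g (Set.Iio t) t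

/-- Every countable family of half-open intervals `[aₙ, bₙ)` can be replaced by a
pairwise disjoint countable family of half-open intervals with the same union and
no larger total `g`-length. -/
theorem stmt0 (g : ℝ → ℝ) (hg : Monotone g) (hlc : LeftCont g)
    (a b : ℕ → ℝ) (hab : ∀ n, a n < b n) :
    ∃ c d : ℕ → ℝ, (∀ n, c n < d n) ∧
      (Pairwise fun m n => Disjoint (Set.Ico (c m) (d m)) (Set.Ico (c n) (d n))) ∧
      (⋃ n, Set.Ico (a n) (b n)) = (⋃ n, Set.Ico (c n) (d n)) ∧
      ∑' n, ENNReal.ofReal (g (d n) - g (c n)) ≤ ∑' n, ENNReal.ofReal (g (b n) - g (a n)) := by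
  classical
  refine ⟨fun k => (FF a b k).1, fun k => (FF a b k).2, FF_lt hab, FF_disjoint hab,
    (FF_union hab).symm, ?_⟩
  -- Build the mirrored Stieltjes function `G x = -g (-x)`.
  have hGmono : Monotone fun x : ℝ => -g (-x) :=
    fun x y hxy => neg_le_neg (hg (neg_le_neg hxy))
  have hGrc : ∀ x : ℝ, ContinuousWithinAt (fun x : ℝ => -g (-x)) (Set.Ici x) x := by
    intro x
    have h1 : ContinuousWithinAt g (Set.Iic (-x)) (-x) :=
      continuousWithinAt_Iio_iff_Iic.1 (hlc (-x))
    have h2 : ContinuousWithinAt (fun y : ℝ => g (-y)) (Set.Ici x) x :=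
      h1.comp continuous_neg.continuousWithinAt fun y hy => by
        simpa using neg_le_neg (Set.mem_Ici.1 hy)
    exact h2.neg
  let G : StieltjesFunction ℝ := ⟨fun x => -g (-x), hGmono, hGrc⟩
  have key : ∀ p q : ℝ, ENNReal.ofReal (g q - g p) = G.measure (Set.Ioc (-q) (-p)) := by
    intro p q
    rw [G.measure_Ioc]
    congr 1
    show g q - g p = -g (- -p) - -g (- -q)
    simp only [neg_neg]
    ring
  have hpre : ∀ p q : ℝ, (fun x : ℝ => -x) ⁻¹' Set.Ico p q = Set.Ioc (-q) (-p) := by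
    intro p q
    ext x
    simp only [Set.mem_preimage, Set.mem_Ico, Set.mem_Ioc]
    constructor <;> intro h <;> exact ⟨by linarith [h.1, h.2], by linarith [h.1, h.2]⟩
  have hpre' : ∀ p : ℝ × ℝ, (fun x : ℝ => -x) ⁻¹' sIco p = Set.Ioc (-p.2) (-p.1) :=
    fun p => hpre p.1 p.2
  calc ∑' k, ENNReal.ofReal (g (FF a b k).2 - g (FF a b k).1)
      = ∑' k, G.measure ((fun x : ℝ => -x) ⁻¹' sIco (FF a b k)) := by
        refine tsum_congr fun k => ?_
        rw [key, hpre']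
    _ = G.measure (⋃ k, (fun x : ℝ => -x) ⁻¹' sIco (FF a b k)) := by
        rw [MeasureTheory.measure_iUnion]
        · intro k l hkl
          exact Disjoint.preimage _ (FF_disjoint hab hkl)
        · intro k
          rw [hpre']
          exact measurableSet_Ioc
    _ = G.measure ((fun x : ℝ => -x) ⁻¹' ⋃ n, Set.Ico (a n) (b n)) := by
        rw [← Set.preimage_iUnion, FF_union hab]
    _ = G.measure (⋃ n, (fun x : ℝ => -x) ⁻¹' Set.Ico (a n) (b n)) := by
        rw [Set.preimage_iUnion]
    _ ≤ ∑' n, G.measure ((fun x : ℝ => -x) ⁻¹' Set.Ico (a n) (b n)) :=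
        MeasureTheory.measure_iUnion_le _
    _ = ∑' n, ENNReal.ofReal (g (b n) - g (a n)) := by
        refine tsum_congr fun n => ?_
        rw [hpre, ← key]
end

section
/- Let g₁, g₂: ℝ → ℝ be nondecreasing and left-continuous. Then g₁ is g₂-continuous (on all of ℝ) if and only if C_{g₂} ⊆ C_{g₁} and D_{g₁} ⊆ D_{g₂}. -/
open Set

/-- `f` is `g`-continuous (at every point of `ℝ`). -/
def GCont (g f : ℝ → ℝ) : Prop :=
  ∀ t : ℝ, ∀ ε > 0, ∃ δ > 0, ∀ s : ℝ, |g s - g t| < δ → |f s - f t| < ε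

/-- The set of points around which `g` is locally constant. -/
def CSet (g : ℝ → ℝ) : Set ℝ :=
  {t : ℝ | ∃ ε > 0, ∀ s ∈ Set.Ioo (t - ε) (t + ε), g s = g t}

/-- The set of discontinuity points of `g`. -/
def DSet (g : ℝ → ℝ) : Set ℝ := {t : ℝ | ¬ ContinuousAt g t}

/-- If every point of `Ioo p q` is in `CSet g`, then `g` is constant on `Ioo p q`. -/
lemma aux_const (g : ℝ → ℝ) (p q : ℝ)
    (hC : ∀ m ∈ Ioo p q, m ∈ CSet g) :
    ∀ u ∈ Ioo p q, ∀ v ∈ Ioo p q, u ≤ v → g u = g v := by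
  intro u hu v hv huv
  set S : Set ℝ := {x | x ∈ Icc u v ∧ g x = g u} with hS
  have hSne : S.Nonempty := ⟨u, ⟨le_rfl, huv⟩, rfl⟩
  have hSbdd : BddAbove S := ⟨v, fun x hx => hx.1.2⟩
  set c := sSup S with hc
  have hcu : u ≤ c := le_csSup hSbdd ⟨⟨le_rfl, huv⟩, rfl⟩
  have hcv : c ≤ v := csSup_le hSne (fun x hx => hx.1.2)
  have hcIoo : c ∈ Ioo p q := ⟨lt_of_lt_of_le hu.1 hcu, lt_of_le_of_lt hcv hv.2⟩
  obtain ⟨r, hr, hconst⟩ := hC c hcIoo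
  obtain ⟨x, hxS, hxgt⟩ := exists_lt_of_lt_csSup hSne (by linarith : c - r < c)
  have hxc : x ≤ c := le_csSup hSbdd hxS
  have hgc : g c = g u := by
    have h1 := hconst x ⟨hxgt, by linarith⟩
    rw [← h1]; exact hxS.2
  rcases eq_or_lt_of_le hcv with hcv' | hcv'
  · rw [← hcv']; exact hgc.symm
  · exfalso
    set y := min (c + r/2) v with hy
    have hyc : c < y := lt_min (by linarith) hcv'
    have hyS : y ∈ S := by
      constructor
      · exact ⟨le_trans hcu hyc.le, min_le_right _ _⟩
      · have hmem : y ∈ Ioo (c - r) (c + r) :=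
          ⟨by linarith, lt_of_le_of_lt (min_le_left _ _) (by linarith)⟩
        rw [hconst y hmem]; exact hgc
    exact absurd (le_csSup hSbdd hyS) (not_le.mpr hyc)

/-- Left-continuous extension of a constant on an open interval to the right endpoint. -/
lemma ext_left (g : ℝ → ℝ) (q k p : ℝ) (hpq : p < q)
    (hlc : ContinuousWithinAt g (Set.Iio q) q)
    (h : ∀ s ∈ Ioo p q, g s = k) : g q = k := by
  have h1 : Filter.Tendsto g (nhdsWithin q (Iio q)) (nhds (g q)) := hlc
  have h2 : Filter.Tendsto g (nhdsWithin q (Iio q)) (nhds k) := by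
    apply Filter.Tendsto.congr' _ tendsto_const_nhds
    filter_upwards [Ioo_mem_nhdsLT_of_mem (⟨hpq, le_rfl⟩ : q ∈ Ioc p q)] with s hs
    exact (h s hs).symm
  exact tendsto_nhds_unique h1 h2

lemma right_ok (g₁ g₂ : ℝ → ℝ) (h₁mono : Monotone g₁) (h₁lc : LeftCont g₁)
    (h₂mono : Monotone g₂) (h₂lc : LeftCont g₂)
    (hC : CSet g₂ ⊆ CSet g₁) (hD : DSet g₁ ⊆ DSet g₂)
    (t ε : ℝ) (hε : 0 < ε) :
    ∃ δ > 0, ∀ s, t ≤ s → g₂ s - g₂ t < δ → g₁ s - g₁ t < ε := by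
  by_contra hcon
  push_neg at hcon
  set A := {s | t ≤ s ∧ g₁ t + ε ≤ g₁ s} with hA
  have hAne : A.Nonempty := by
    obtain ⟨s, hs1, _, hs3⟩ := hcon 1 one_pos
    exact ⟨s, hs1, by linarith⟩
  have hAbdd : BddBelow A := ⟨t, fun s hs => hs.1⟩
  set a := sInf A with ha
  have hta : t ≤ a := le_csInf hAne (fun s hs => hs.1)
  have hmemA : ∀ s ∈ A, a ≤ s := fun s hs => csInf_le hAbdd hs
  have hupA : ∀ s, a < s → g₁ t + ε ≤ g₁ s := by
    intro s hs
    obtain ⟨x, hxA, hxs⟩ := exists_lt_of_csInf_lt hAne hs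
    exact le_trans hxA.2 (h₁mono hxs.le)
  have hg2 : ∀ u ∈ Icc t a, g₂ u = g₂ t := by
    intro u hu
    refine le_antisymm ?_ (h₂mono hu.1)
    refine le_of_forall_pos_lt_add ?_
    intro δ hδ
    obtain ⟨s, hs1, hs2, hs3⟩ := hcon δ hδ
    have hsA : s ∈ A := ⟨hs1, by linarith⟩
    calc g₂ u ≤ g₂ s := h₂mono (le_trans hu.2 (hmemA s hsA))
    _ < g₂ t + δ := by linarith
  rcases eq_or_lt_of_le hta with hta' | hta'
  · -- a = t
    have hdisc : t ∈ DSet g₁ := by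
      intro hcont
      rw [Metric.continuousAt_iff] at hcont
      obtain ⟨δ, hδ, h⟩ := hcont ε hε
      have h1 := hupA (t + δ/2) (by rw [← hta']; linarith)
      have h2 := h (x := t + δ/2) (by rw [Real.dist_eq, abs_of_nonneg (by linarith)]; linarith)
      rw [Real.dist_eq, abs_of_nonneg (by linarith)] at h2
      linarith
    apply hD hdisc
    rw [Metric.continuousAt_iff]
    intro ε' hε'
    obtain ⟨s', hs1, hs2, hs3⟩ := hcon ε' hε'
    have hs't : t < s' := by
      rcases eq_or_lt_of_le hs1 with h | h
      · exfalso; rw [← h] at hs3; linarith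
      · exact h
    obtain ⟨δ₁, hδ₁, hleft⟩ := Metric.continuousWithinAt_iff.mp (h₂lc t) ε' hε'
    refine ⟨min δ₁ (s' - t), lt_min hδ₁ (by linarith), ?_⟩
    intro y hy
    rcases lt_or_ge y t with h | h
    · exact hleft h (lt_of_lt_of_le hy (min_le_left _ _))
    · have hy2 := abs_lt.mp (by rw [← Real.dist_eq]; exact lt_of_lt_of_le hy (min_le_right _ _))
      have hb1 : g₂ t ≤ g₂ y := h₂mono h
      have hb2 : g₂ y ≤ g₂ s' := h₂mono (by linarith [hy2.2] : y ≤ s')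
      rw [Real.dist_eq, abs_of_nonneg (by linarith)]
      linarith
  · -- t < a
    have hCg1 : ∀ m ∈ Ioo t a, m ∈ CSet g₁ := by
      intro m hm
      apply hC
      refine ⟨min (m - t) (a - m), lt_min (by linarith [hm.1]) (by linarith [hm.2]), ?_⟩
      intro s hs
      have h1 : t < s := by
        have := hs.1
        have h2 := min_le_left (m - t) (a - m); linarith
      have h2 : s < a := by
        have := hs.2
        have h3 := min_le_right (m - t) (a - m); linarith
      rw [hg2 s ⟨h1.le, h2.le⟩, hg2 m ⟨hm.1.le, hm.2.le⟩]
    set w := (t + a)/2 with hwdef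
    have hw : w ∈ Ioo t a := ⟨by simp only [hwdef]; linarith, by simp only [hwdef]; linarith⟩
    have hconst1 : ∀ s ∈ Ioo t a, g₁ s = g₁ w := by
      intro s hs
      rcases le_total s w with h | h
      · exact aux_const g₁ t a hCg1 s hs w hw h
      · exact (aux_const g₁ t a hCg1 w hw s hs h).symm
    have hga : g₁ a = g₁ w := ext_left g₁ a (g₁ w) t hta' (h₁lc a) hconst1
    have hwlt : g₁ w < g₁ t + ε := by
      by_contra h
      push_neg at h
      have hwA : w ∈ A := ⟨hw.1.le, h⟩
      have := hmemA w hwA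
      have := hw.2; linarith
    have hga' : g₁ a < g₁ t + ε := by rw [hga]; exact hwlt
    have hdisc : a ∈ DSet g₁ := by
      intro hcont
      rw [Metric.continuousAt_iff] at hcont
      obtain ⟨δ, hδ, h⟩ := hcont (g₁ t + ε - g₁ a) (by linarith)
      have h1 := hupA (a + δ/2) (by linarith)
      have h2 := h (x := a + δ/2) (by rw [Real.dist_eq, abs_of_nonneg (by linarith)]; linarith)
      have h3 : g₁ a ≤ g₁ (a + δ/2) := h₁mono (by linarith)
      rw [Real.dist_eq, abs_of_nonneg (by linarith)] at h2
      linarith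
    apply hD hdisc
    rw [Metric.continuousAt_iff]
    intro ε' hε'
    obtain ⟨s', hs1, hs2, hs3⟩ := hcon ε' hε'
    have hs'A : s' ∈ A := ⟨hs1, by linarith⟩
    have hs'a : a < s' := by
      rcases eq_or_lt_of_le (hmemA s' hs'A) with h | h
      · exfalso; rw [← h] at hs3; linarith
      · exact h
    have hg2a : g₂ a = g₂ t := hg2 a ⟨hta, le_rfl⟩
    refine ⟨min (a - t) (s' - a), lt_min (by linarith) (by linarith), ?_⟩
    intro y hy
    have hy1 := abs_lt.mp (by rw [← Real.dist_eq]; exact lt_of_lt_of_le hy (min_le_left _ _))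
    have hy2 := abs_lt.mp (by rw [← Real.dist_eq]; exact lt_of_lt_of_le hy (min_le_right _ _))
    rcases le_total y a with h | h
    · have hgy : g₂ y = g₂ t := hg2 y ⟨by linarith [hy1.1], h⟩
      rw [Real.dist_eq, hgy, hg2a, sub_self, abs_zero]; exact hε'
    · have hb1 : g₂ y ≤ g₂ s' := h₂mono (by linarith [hy2.2])
      have hb2 : g₂ a ≤ g₂ y := h₂mono h
      rw [Real.dist_eq, abs_of_nonneg (by linarith)]
      rw [hg2a]; linarith
lemma left_ok (g₁ g₂ : ℝ → ℝ) (h₁mono : Monotone g₁) (h₁lc : LeftCont g₁)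
    (h₂mono : Monotone g₂) (h₂lc : LeftCont g₂)
    (hC : CSet g₂ ⊆ CSet g₁) (hD : DSet g₁ ⊆ DSet g₂)
    (t ε : ℝ) (hε : 0 < ε) :
    ∃ δ > 0, ∀ s, s < t → g₂ t - g₂ s < δ → g₁ t - g₁ s < ε := by
  by_contra hcon
  push_neg at hcon
  set B := {s | s < t ∧ g₁ s ≤ g₁ t - ε} with hB
  have hBne : B.Nonempty := by
    obtain ⟨s, hs1, _, hs3⟩ := hcon 1 one_pos
    exact ⟨s, hs1, by linarith⟩
  have hBbdd : BddAbove B := ⟨t, fun s hs => hs.1.le⟩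
  set b := sSup B with hb
  have hbt : b ≤ t := csSup_le hBne fun s hs => hs.1.le
  have hmemB : ∀ s ∈ B, s ≤ b := fun s hs => le_csSup hBbdd hs
  have hdownB : ∀ s, s < b → g₁ s ≤ g₁ t - ε := by
    intro s hs
    obtain ⟨x, hxB, hxs⟩ := exists_lt_of_lt_csSup hBne hs
    exact le_trans (h₁mono hxs.le) hxB.2
  have hg2 : ∀ u ∈ Icc b t, g₂ u = g₂ t := by
    intro u hu
    refine le_antisymm (h₂mono hu.2) ?_
    refine le_of_forall_pos_lt_add ?_
    intro δ hδ
    obtain ⟨s, hs1, hs2, hs3⟩ := hcon δ hδ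
    have hsu : g₂ s ≤ g₂ u := h₂mono (le_trans (hmemB s ⟨hs1, by linarith⟩) hu.1)
    linarith
  have hg1b : g₁ b ≤ g₁ t - ε := by
    have h1 : Filter.Tendsto g₁ (nhdsWithin b (Iio b)) (nhds (g₁ b)) := h₁lc b
    refine le_of_tendsto h1 ?_
    filter_upwards [self_mem_nhdsWithin] with s hs
    exact hdownB s hs
  rcases eq_or_lt_of_le hbt with hbt' | hbt'
  · rw [hbt'] at hg1b; linarith
  · have hCg1 : ∀ m ∈ Ioo b t, m ∈ CSet g₁ := by
      intro m hm
      apply hC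
      refine ⟨min (m - b) (t - m), lt_min (by linarith [hm.1]) (by linarith [hm.2]), ?_⟩
      intro s hs
      have h1 : b < s := by
        have := hs.1
        have h2 := min_le_left (m - b) (t - m); linarith
      have h2 : s < t := by
        have := hs.2
        have h3 := min_le_right (m - b) (t - m); linarith
      rw [hg2 s ⟨h1.le, h2.le⟩, hg2 m ⟨hm.1.le, hm.2.le⟩]
    set w := (b + t)/2 with hwdef
    have hw : w ∈ Ioo b t := ⟨by simp only [hwdef]; linarith, by simp only [hwdef]; linarith⟩
    have hconst1 : ∀ s ∈ Ioo b t, g₁ s = g₁ w := by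
      intro s hs
      rcases le_total s w with h | h
      · exact aux_const g₁ b t hCg1 s hs w hw h
      · exact (aux_const g₁ b t hCg1 w hw s hs h).symm
    have hgt : g₁ t = g₁ w := ext_left g₁ t (g₁ w) b hbt' (h₁lc t) hconst1
    have hdisc : b ∈ DSet g₁ := by
      intro hcont
      rw [Metric.continuousAt_iff] at hcont
      obtain ⟨δ, hδ, h⟩ := hcont ε hε
      set s₀ := min (b + δ/2) w with hs₀def
      have hs₀b : b < s₀ := lt_min (by linarith) hw.1
      have hs₀Ioo : s₀ ∈ Ioo b t := ⟨hs₀b, lt_of_le_of_lt (min_le_right _ _) hw.2⟩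
      have hval : g₁ s₀ = g₁ t := by rw [hconst1 s₀ hs₀Ioo, hgt]
      have hdist : dist s₀ b < δ := by
        rw [Real.dist_eq, abs_of_nonneg (by linarith)]
        have := min_le_left (b + δ/2) w; linarith
      have h2 := h hdist
      have h3 : g₁ b ≤ g₁ s₀ := h₁mono hs₀b.le
      rw [Real.dist_eq, abs_of_nonneg (by linarith)] at h2
      rw [hval] at h2
      linarith
    apply hD hdisc
    rw [Metric.continuousAt_iff]
    intro ε' hε'
    obtain ⟨δ₁, hδ₁, hleft⟩ := Metric.continuousWithinAt_iff.mp (h₂lc b) ε' hε'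
    have hg2b : g₂ b = g₂ t := hg2 b ⟨le_rfl, hbt⟩
    refine ⟨min δ₁ (t - b), lt_min hδ₁ (by linarith), ?_⟩
    intro y hy
    rcases lt_or_ge y b with h | h
    · exact hleft h (lt_of_lt_of_le hy (min_le_left _ _))
    · have hy2 := abs_lt.mp (by rw [← Real.dist_eq]; exact lt_of_lt_of_le hy (min_le_right _ _))
      have hgy : g₂ y = g₂ t := hg2 y ⟨h, by linarith [hy2.2]⟩
      rw [Real.dist_eq, hgy, hg2b, sub_self, abs_zero]; exact hε'

/-- `g₁` is `g₂`-continuous iff `C_{g₂} ⊆ C_{g₁}` and `D_{g₁} ⊆ D_{g₂}`. -/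
theorem stmt6 (g₁ g₂ : ℝ → ℝ)
    (h₁mono : Monotone g₁) (h₁lc : LeftCont g₁)
    (h₂mono : Monotone g₂) (h₂lc : LeftCont g₂) :
    GCont g₂ g₁ ↔ CSet g₂ ⊆ CSet g₁ ∧ DSet g₁ ⊆ DSet g₂ := by
  constructor
  · intro hG
    constructor
    · intro t ht
      obtain ⟨ε₀, hε₀, hconst⟩ := ht
      refine ⟨ε₀, hε₀, ?_⟩
      intro s hs
      have key : ∀ ε' > 0, |g₁ s - g₁ t| < ε' := by
        intro ε' hε'
        obtain ⟨δ, hδ, h⟩ := hG t ε' hε'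
        apply h
        rw [hconst s hs, sub_self, abs_zero]; exact hδ
      by_contra hne
      have hpos : 0 < |g₁ s - g₁ t| := abs_pos.mpr (sub_ne_zero.mpr hne)
      exact absurd (key _ hpos) (lt_irrefl _)
    · intro t ht
      intro hcont
      apply ht
      rw [Metric.continuousAt_iff] at hcont ⊢
      intro ε hε
      obtain ⟨δ, hδ, h⟩ := hG t ε hε
      obtain ⟨δ', hδ', h'⟩ := hcont δ hδ
      refine ⟨δ', hδ', ?_⟩
      intro y hy
      have h2 := h' hy
      rw [Real.dist_eq] at h2
      rw [Real.dist_eq]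
      exact h y h2
  · rintro ⟨hC, hD⟩ t ε hε
    obtain ⟨δ₁, hδ₁, hr⟩ := right_ok g₁ g₂ h₁mono h₁lc h₂mono h₂lc hC hD t ε hε
    obtain ⟨δ₂, hδ₂, hl⟩ := left_ok g₁ g₂ h₁mono h₁lc h₂mono h₂lc hC hD t ε hε
    refine ⟨min δ₁ δ₂, lt_min hδ₁ hδ₂, ?_⟩
    intro s hs
    rcases le_total t s with h | h
    · have h1 : g₂ t ≤ g₂ s := h₂mono h
      have h2 : g₁ t ≤ g₁ s := h₁mono h
      rw [abs_of_nonneg (by linarith)] at hs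
      rw [abs_of_nonneg (by linarith)]
      exact hr s h (lt_of_lt_of_le hs (min_le_left _ _))
    · rcases eq_or_lt_of_le h with he | hlt
      · rw [he, sub_self, abs_zero]; exact hε
      · have h1 : g₂ s ≤ g₂ t := h₂mono h
        have h2 : g₁ s ≤ g₁ t := h₁mono h
        rw [abs_of_nonpos (by linarith)] at hs
        rw [abs_of_nonpos (by linarith)]
        have h3 := hl s hlt (by linarith [lt_of_lt_of_le hs (min_le_right _ _)])
        linarith
end

section
/- Let g₁, g₂: ℝ → ℝ be nondecreasing and left-continuous. The following are equivalent: (1) g₁ is g₂-continuous and g₂ is g₁-continuous; (2) C_{g₁} = C_{g₂} and D_{g₁} = D_{g₂}; (3) the pseudometric topologies τ_{g₁} and τ_{g₂} on ℝ coincide. -/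
open Set

/-- The pseudometric topology `τ_g`. -/
def tauTop (g : ℝ → ℝ) : TopologicalSpace ℝ :=
  TopologicalSpace.generateFrom
    {s : Set ℝ | ∃ x r : ℝ, 0 < r ∧ s = {y : ℝ | |g y - g x| < r}}

open Filter Topology

variable {g : ℝ → ℝ}

/-- From left continuity: points slightly to the left with value close. -/
lemma left_pt (hlc : LeftCont g) {t a : ℝ} (hat : a < t) {ε : ℝ} (hε : 0 < ε) :
    ∃ s, a < s ∧ s < t ∧ |g s - g t| < ε := by
  have h1 : ∀ᶠ s in 𝓝[<] t, |g s - g t| < ε := by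
    have := (hlc t).tendsto
    have := Metric.tendsto_nhds.mp this ε hε
    simpa [Real.dist_eq] using this
  have h2 : Ioo a t ∈ 𝓝[<] t := Ioo_mem_nhdsLT_of_mem ⟨hat, le_refl t⟩
  rcases (h1.and (eventually_of_mem h2 (fun x hx => hx))).exists with ⟨s, hs1, hs2⟩
  exact ⟨s, hs2.1, hs2.2, hs1⟩

/-- Monotone + left continuous + approachable from the right ⇒ continuous. -/
lemma cont_of_right (hm : Monotone g) (hlc : LeftCont g) {t : ℝ}
    (h : ∀ δ > 0, ∃ s, t < s ∧ g s - g t < δ) : ContinuousAt g t := by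
  rw [continuousAt_iff_continuous_left_right]
  constructor
  · exact continuousWithinAt_Iio_iff_Iic.mp (hlc t)
  · rw [Metric.continuousWithinAt_iff]
    intro ε hε
    rcases h ε hε with ⟨s₁, hs₁, hval⟩
    refine ⟨s₁ - t, by linarith, fun x hx hdist => ?_⟩
    have hxt : t ≤ x := hx
    have hxs : x ≤ s₁ := by
      rw [Real.dist_eq, abs_lt] at hdist; linarith [hdist.2]
    have := hm hxt
    have := hm hxs
    rw [Real.dist_eq, abs_lt]
    constructor <;> linarith

/-- From continuity at `t`: points slightly to the right with value close. -/
lemma right_pt (hc : ContinuousAt g t) {b : ℝ} (htb : t < b) {ε : ℝ} (hε : 0 < ε) :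
    ∃ s, t < s ∧ s < b ∧ |g s - g t| < ε := by
  have h1 : ∀ᶠ s in 𝓝[>] t, |g s - g t| < ε := by
    have := (hc.continuousWithinAt (s := Ioi t)).tendsto
    have := Metric.tendsto_nhds.mp this ε hε
    simpa [Real.dist_eq] using this
  have h2 : Ioo t b ∈ 𝓝[>] t := Ioo_mem_nhdsGT_of_mem ⟨le_refl t, htb⟩
  rcases (h1.and (eventually_of_mem h2 (fun x hx => hx))).exists with ⟨s, hs1, hs2⟩
  exact ⟨s, hs2.1, hs2.2, hs1⟩

/-- A monotone, left-continuous, locally constant function on `Ioo a b` is constant there. -/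
lemma const_of_locallyConst (hm : Monotone g) (hlc : LeftCont g) {a b : ℝ}
    (hloc : ∀ m ∈ Ioo a b, ∃ η > 0, ∀ x ∈ Ioo (m - η) (m + η), g x = g m)
    {x y : ℝ} (hx : x ∈ Ioo a b) (hy : y ∈ Ioo a b) : g x = g y := by
  suffices H : ∀ u v : ℝ, u ∈ Ioo a b → v ∈ Ioo a b → u ≤ v → g v = g u by
    rcases le_total x y with h | h
    · exact (H x y hx hy h).symm
    · exact H y x hy hx h
  intro x y hx hy hxy
  set A : Set ℝ := {s | s ∈ Icc x y ∧ g s = g x} with hA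
  have hxA : x ∈ A := ⟨⟨le_refl x, hxy⟩, rfl⟩
  have hne : A.Nonempty := ⟨x, hxA⟩
  have hbdd : BddAbove A := ⟨y, fun s hs => hs.1.2⟩
  set w := sSup A with hw
  have hwmem : w ∈ Icc x y := ⟨le_csSup hbdd hxA, csSup_le hne (fun s hs => hs.1.2)⟩
  -- g w = g x
  have hgw : g w = g x := by
    rcases eq_or_lt_of_le hwmem.1 with h | h
    · rw [← h]
    · -- left continuity: g s = g x for s ∈ [x, w)
      have hle : ∀ s, x ≤ s → s < w → g s = g x := by
        intro s hxs hsw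
        rcases exists_lt_of_lt_csSup hne hsw with ⟨s', hs'A, hss'⟩
        exact le_antisymm (hs'A.2 ▸ hm hss'.le) (hm hxs)
      have h1 : ∀ᶠ s in 𝓝[<] w, g s = g x := by
        filter_upwards [Ioo_mem_nhdsLT_of_mem (⟨h, le_refl w⟩ : w ∈ Ioc x w)]
          with s hs using hle s hs.1.le hs.2
      have h2 : Tendsto g (𝓝[<] w) (𝓝 (g w)) := (hlc w).tendsto
      have h3 : Tendsto g (𝓝[<] w) (𝓝 (g x)) :=
        Tendsto.congr' (h1.mono fun s hs => hs.symm) tendsto_const_nhds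
      exact tendsto_nhds_unique h2 h3
  have hwIoo : w ∈ Ioo a b := ⟨lt_of_lt_of_le hx.1 hwmem.1, lt_of_le_of_lt hwmem.2 hy.2⟩
  -- w = y
  rcases eq_or_lt_of_le hwmem.2 with h | h
  · rw [← h, hgw]
  · exfalso
    rcases hloc w hwIoo with ⟨η, hη, hconst⟩
    set s := min (w + η / 2) y with hs
    have hsw : w < s := lt_min (by linarith) h
    have hsmem : s ∈ Ioo (w - η) (w + η) := ⟨by linarith, lt_of_le_of_lt (min_le_left _ _) (by linarith)⟩
    have : s ∈ A := ⟨⟨le_trans hwmem.1 hsw.le, min_le_right _ _⟩, by rw [hconst s hsmem, hgw]⟩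
    exact absurd (le_csSup hbdd this) (not_le.mpr hsw)


lemma right_side {g h : ℝ → ℝ} (hgm : Monotone g) (hglc : LeftCont g)
    (hhm : Monotone h) (hhlc : LeftCont h)
    (hC : CSet g = CSet h) (hD : DSet g = DSet h)
    (t ε : ℝ) (hε : 0 < ε) :
    ∃ δ > 0, ∀ s, t ≤ s → h s - h t < δ → g s - g t < ε := by
  by_contra hcon
  push_neg at hcon
  have hbad : ∀ δ > 0, ∃ s, t < s ∧ h s - h t < δ ∧ ε ≤ g s - g t := by
    intro δ hδ
    rcases hcon δ hδ with ⟨s, hts, h1, h2⟩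
    rcases eq_or_lt_of_le hts with rfl | hlt
    · linarith
    · exact ⟨s, hlt, h1, h2⟩
  have hhct : ContinuousAt h t := cont_of_right hhm hhlc (fun δ hδ => by
    rcases hbad δ hδ with ⟨s, h1, h2, _⟩; exact ⟨s, h1, h2⟩)
  have hgct : ContinuousAt g t := by
    have h1 : t ∉ DSet h := fun hc => hc hhct
    rw [← hD] at h1
    exact not_not.mp h1
  set B : Set ℝ := {s | t < s ∧ ε ≤ g s - g t} with hB
  have hBne : B.Nonempty := by
    rcases hbad 1 one_pos with ⟨s, h1, _, h3⟩; exact ⟨s, h1, h3⟩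
  have hBbdd : BddBelow B := ⟨t, fun s hs => hs.1.le⟩
  set u := sInf B with hu
  obtain ⟨s₀, hts₀, -, hs₀ε⟩ := right_pt hgct (lt_add_one t) hε
  have hs₀lb : ∀ b ∈ B, s₀ ≤ b := by
    intro b hb
    by_contra hc
    push_neg at hc
    have h1 := hgm hc.le
    have h2 := hgm hts₀.le
    have := abs_lt.mp hs₀ε
    have := hb.2
    linarith
  have htu : t < u := lt_of_lt_of_le hts₀ (le_csInf hBne hs₀lb)
  have hhu : h u = h t := by
    have h1 : h t ≤ h u := hhm htu.le
    have h2 : ∀ δ > 0, h u ≤ h t + δ := by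
      intro δ hδ
      rcases hbad δ hδ with ⟨s, h1', h2', h3'⟩
      have hus : u ≤ s := csInf_le hBbdd ⟨h1', h3'⟩
      linarith [hhm hus]
    linarith [le_of_forall_pos_le_add h2]
  have hhconst : ∀ s ∈ Icc t u, h s = h t := fun s hs =>
    le_antisymm (hhu ▸ hhm hs.2) (hhm hs.1)
  have hCg : ∀ m ∈ Ioo t u, ∃ η > 0, ∀ x ∈ Ioo (m - η) (m + η), g x = g m := by
    intro m hm'
    have hmC : m ∈ CSet h := by
      refine ⟨min (m - t) (u - m), lt_min (by linarith [hm'.1]) (by linarith [hm'.2]),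
        fun s hs => ?_⟩
      have h1 : t ≤ s := by
        have := hs.1; have := min_le_left (m - t) (u - m); linarith
      have h2 : s ≤ u := by
        have := hs.2; have := min_le_right (m - t) (u - m); linarith
      rw [hhconst s ⟨h1, h2⟩, hhconst m ⟨hm'.1.le, hm'.2.le⟩]
    rw [← hC] at hmC
    exact hmC
  have hgconstIoo : ∀ m ∈ Ioo t u, g m = g t := by
    intro m hm'
    refine le_antisymm ?_ (hgm hm'.1.le)
    refine le_of_forall_pos_le_add (fun θ hθ => ?_)
    obtain ⟨s₁, h1, h2, h3⟩ := right_pt hgct hm'.1 hθ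
    have heq : g m = g s₁ :=
      const_of_locallyConst hgm hglc hCg hm' ⟨h1, lt_trans h2 hm'.2⟩
    have := abs_lt.mp h3
    linarith
  have hgu : g u = g t := by
    have h1 : ∀ᶠ s in 𝓝[<] u, g s = g t := by
      filter_upwards [Ioo_mem_nhdsLT_of_mem (⟨htu, le_refl u⟩ : u ∈ Ioc t u)] with s hs
      exact hgconstIoo s hs
    exact tendsto_nhds_unique (hglc u).tendsto
      (Tendsto.congr' (h1.mono fun s hs => hs.symm) tendsto_const_nhds)
  have hhcu : ContinuousAt h u := cont_of_right hhm hhlc (fun δ hδ => by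
    rcases hbad δ hδ with ⟨s, h1, h2, h3⟩
    have hus : u ≤ s := csInf_le hBbdd ⟨h1, h3⟩
    have hune : u ≠ s := by
      rintro rfl
      linarith [hgu]
    exact ⟨s, lt_of_le_of_ne hus hune, by linarith [hhu]⟩)
  have hgcu : ContinuousAt g u := by
    have h1 : u ∉ DSet h := fun hc => hc hhcu
    rw [← hD] at h1
    exact not_not.mp h1
  obtain ⟨s₂, h1, h2, h3⟩ := right_pt hgcu (lt_add_one u) hε
  obtain ⟨b, hbB, hbs⟩ := exists_lt_of_csInf_lt hBne h1
  have := hgm hbs.le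
  have := abs_lt.mp h3
  have := hbB.2
  linarith

lemma left_side {g h : ℝ → ℝ} (hgm : Monotone g) (hglc : LeftCont g)
    (hhm : Monotone h) (hhlc : LeftCont h)
    (hC : CSet g = CSet h) (hD : DSet g = DSet h)
    (t ε : ℝ) (hε : 0 < ε) :
    ∃ δ > 0, ∀ s, s ≤ t → h t - h s < δ → g t - g s < ε := by
  by_contra hcon
  push_neg at hcon
  have hbad : ∀ δ > 0, ∃ s, s < t ∧ h t - h s < δ ∧ ε ≤ g t - g s := by
    intro δ hδ
    rcases hcon δ hδ with ⟨s, hts, h1, h2⟩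
    rcases eq_or_lt_of_le hts with rfl | hlt
    · linarith
    · exact ⟨s, hlt, h1, h2⟩
  obtain ⟨s₀, -, hs₀t, hs₀ε⟩ := left_pt hglc (sub_one_lt t) hε
  set B : Set ℝ := {s | s < t ∧ ε ≤ g t - g s} with hB
  have hBne : B.Nonempty := by
    rcases hbad 1 one_pos with ⟨s, h1, _, h3⟩; exact ⟨s, h1, h3⟩
  have hub : ∀ b ∈ B, b ≤ s₀ := by
    intro b hb
    by_contra hc
    push_neg at hc
    have h1 := hgm hc.le
    have := abs_lt.mp hs₀ε
    have := hb.2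
    linarith
  have hBbdd : BddAbove B := ⟨s₀, hub⟩
  set u := sSup B with hu
  have hut : u < t := lt_of_le_of_lt (csSup_le hBne hub) hs₀t
  have hhu : h u = h t := by
    have h1 : h u ≤ h t := hhm hut.le
    have h2 : ∀ δ > 0, h t ≤ h u + δ := by
      intro δ hδ
      rcases hbad δ hδ with ⟨s, h1', h2', h3'⟩
      have hsu : s ≤ u := le_csSup hBbdd ⟨h1', h3'⟩
      linarith [hhm hsu]
    linarith [le_of_forall_pos_le_add h2]
  have hhconst : ∀ s ∈ Icc u t, h s = h t := fun s hs =>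
    le_antisymm (hhm hs.2) (hhu ▸ hhm hs.1)
  have hCg : ∀ m ∈ Ioo u t, ∃ η > 0, ∀ x ∈ Ioo (m - η) (m + η), g x = g m := by
    intro m hm'
    have hmC : m ∈ CSet h := by
      refine ⟨min (m - u) (t - m), lt_min (by linarith [hm'.1]) (by linarith [hm'.2]),
        fun s hs => ?_⟩
      have h1 : u ≤ s := by
        have := hs.1; have := min_le_left (m - u) (t - m); linarith
      have h2 : s ≤ t := by
        have := hs.2; have := min_le_right (m - u) (t - m); linarith
      rw [hhconst s ⟨h1, h2⟩, hhconst m ⟨hm'.1.le, hm'.2.le⟩]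
    rw [← hC] at hmC
    exact hmC
  have hgconstIoo : ∀ m ∈ Ioo u t, g m = g t := by
    intro m hm'
    refine le_antisymm (hgm hm'.2.le) ?_
    refine le_of_forall_pos_le_add (fun θ hθ => ?_)
    obtain ⟨s₁, h1, h2, h3⟩ := left_pt hglc hm'.2 hθ
    have heq : g m = g s₁ :=
      const_of_locallyConst hgm hglc hCg hm' ⟨lt_trans hm'.1 h1, h2⟩
    have := abs_lt.mp h3
    linarith
  have hgu : g u ≤ g t - ε := by
    have h1 : ∀ᶠ s in 𝓝[<] u, g s ≤ g t - ε := by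
      refine eventually_nhdsWithin_of_forall (fun s hs => ?_)
      obtain ⟨b, hbB, hsb⟩ := exists_lt_of_lt_csSup hBne hs
      linarith [hgm hsb.le, hbB.2]
    exact le_of_tendsto (hglc u).tendsto h1
  have hhcu : ContinuousAt h u := cont_of_right hhm hhlc (fun δ hδ => by
    refine ⟨(u + t) / 2, by linarith, ?_⟩
    have : h ((u + t) / 2) = h t := hhconst _ ⟨by linarith, by linarith⟩
    linarith)
  have hgcu : ContinuousAt g u := by
    have h1 : u ∉ DSet h := fun hc => hc hhcu
    rw [← hD] at h1
    exact not_not.mp h1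
  obtain ⟨s₂, h1, h2, h3⟩ := right_pt hgcu hut hε
  have heq : g s₂ = g t := hgconstIoo s₂ ⟨h1, h2⟩
  have := abs_lt.mp h3
  linarith


lemma gcont_of_sets {g h : ℝ → ℝ} (hgm : Monotone g) (hglc : LeftCont g)
    (hhm : Monotone h) (hhlc : LeftCont h)
    (hC : CSet g = CSet h) (hD : DSet g = DSet h) : GCont h g := by
  intro t ε hε
  obtain ⟨δ₁, hδ₁, H₁⟩ := right_side hgm hglc hhm hhlc hC hD t ε hε
  obtain ⟨δ₂, hδ₂, H₂⟩ := left_side hgm hglc hhm hhlc hC hD t ε hε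
  refine ⟨min δ₁ δ₂, lt_min hδ₁ hδ₂, fun s hs => ?_⟩
  rcases le_total t s with hts | hts
  · have h1 : h s - h t < δ₁ :=
      lt_of_le_of_lt (le_abs_self _) (lt_of_lt_of_le hs (min_le_left _ _))
    have h2 := H₁ s hts h1
    have := hgm hts
    rw [abs_lt]; constructor <;> linarith
  · have h1 : h t - h s < δ₂ := by
      have := neg_abs_le (h s - h t)
      have := lt_of_lt_of_le hs (min_le_right _ _)
      linarith
    have h2 := H₂ s hts h1
    have := hgm hts
    rw [abs_lt]; constructor <;> linarith

lemma cset_subset {g h : ℝ → ℝ} (hgc : GCont g h) : CSet g ⊆ CSet h := by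
  rintro t ⟨ε, hε, hconst⟩
  refine ⟨ε, hε, fun s hs => ?_⟩
  have hzero : |h s - h t| ≤ 0 := by
    by_contra hc
    push_neg at hc
    obtain ⟨δ, hδ, H⟩ := hgc t _ hc
    have := H s (by rw [hconst s hs]; simpa using hδ)
    linarith
  have := abs_nonneg (h s - h t)
  have : |h s - h t| = 0 := le_antisymm hzero this
  have := abs_eq_zero.mp this
  linarith

lemma dset_subset {g h : ℝ → ℝ} (hgc : GCont g h) : DSet h ⊆ DSet g := by
  intro t ht
  intro hgct
  apply ht
  rw [Metric.continuousAt_iff] at hgct ⊢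
  intro ε hε
  obtain ⟨δ, hδ, H⟩ := hgc t ε hε
  obtain ⟨δ', hδ', H'⟩ := hgct δ hδ
  refine ⟨δ', hδ', fun x hx => ?_⟩
  have := H' hx
  rw [Real.dist_eq] at this ⊢
  exact H x this


lemma tau_le_of_gcont {g h : ℝ → ℝ} (hgc : GCont g h) : tauTop g ≤ tauTop h := by
  letI := tauTop g
  show tauTop g ≤ TopologicalSpace.generateFrom _
  apply le_generateFrom
  rintro U ⟨x, r, hr, rfl⟩
  rw [isOpen_iff_forall_mem_open]
  intro y hy
  have hy' : |h y - h x| < r := hy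
  obtain ⟨δ, hδ, H⟩ := hgc y (r - |h y - h x|) (by linarith)
  refine ⟨{z | |g z - g y| < δ}, fun z hz => ?_, ?_, ?_⟩
  · have h1 := H z hz
    have h2 := abs_sub_le (h z) (h y) (h x)
    show |h z - h x| < r
    linarith
  · exact TopologicalSpace.isOpen_generateFrom_of_mem ⟨y, δ, hδ, rfl⟩
  · show |g y - g y| < δ
    simpa using hδ
lemma gcont_of_tau_le {g h : ℝ → ℝ} (hle : tauTop g ≤ tauTop h) : GCont g h := by
  have key : ∀ U : Set ℝ, IsOpen[tauTop g] U →
      ∀ y ∈ U, ∃ δ > 0, ∀ s, |g s - g y| < δ → s ∈ U := by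
    intro U hU
    induction hU with
    | basic V hV =>
      obtain ⟨x, r, hr, rfl⟩ := hV
      intro y hy
      have hy' : |g y - g x| < r := hy
      refine ⟨r - |g y - g x|, by linarith, fun s hs => ?_⟩
      have h2 := abs_sub_le (g s) (g y) (g x)
      show |g s - g x| < r
      linarith
    | univ => exact fun y _ => ⟨1, one_pos, fun s _ => trivial⟩
    | inter V W hV hW ihV ihW =>
      intro y hy
      obtain ⟨δ₁, hδ₁, H₁⟩ := ihV y hy.1
      obtain ⟨δ₂, hδ₂, H₂⟩ := ihW y hy.2
      exact ⟨min δ₁ δ₂, lt_min hδ₁ hδ₂, fun s hs =>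
        ⟨H₁ s (lt_of_lt_of_le hs (min_le_left _ _)),
         H₂ s (lt_of_lt_of_le hs (min_le_right _ _))⟩⟩
    | sUnion S hS ih =>
      rintro y ⟨V, hVS, hyV⟩
      obtain ⟨δ, hδ, H⟩ := ih V hVS y hyV
      exact ⟨δ, hδ, fun s hs => ⟨V, hVS, H s hs⟩⟩
  intro t ε hε
  have hopen : IsOpen[tauTop h] {y : ℝ | |h y - h t| < ε} :=
    TopologicalSpace.isOpen_generateFrom_of_mem ⟨t, ε, hε, rfl⟩
  have h2 : IsOpen[tauTop g] {y : ℝ | |h y - h t| < ε} := hle _ hopen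
  obtain ⟨δ, hδ, H⟩ := key _ h2 t (by simpa using hε)
  exact ⟨δ, hδ, fun s hs => H s hs⟩

/-- Equivalence of mutual `g`-continuity, equality of the characteristic sets, and
equality of the pseudometric topologies. -/
theorem stmt8 (g₁ g₂ : ℝ → ℝ)
    (h₁mono : Monotone g₁) (h₁lc : LeftCont g₁)
    (h₂mono : Monotone g₂) (h₂lc : LeftCont g₂) :
    ((GCont g₂ g₁ ∧ GCont g₁ g₂) ↔ (CSet g₁ = CSet g₂ ∧ DSet g₁ = DSet g₂)) ∧
    ((CSet g₁ = CSet g₂ ∧ DSet g₁ = DSet g₂) ↔ tauTop g₁ = tauTop g₂) := by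
  have main : (GCont g₂ g₁ ∧ GCont g₁ g₂) ↔ (CSet g₁ = CSet g₂ ∧ DSet g₁ = DSet g₂) := by
    constructor
    · rintro ⟨h21, h12⟩
      exact ⟨subset_antisymm (cset_subset h12) (cset_subset h21),
             subset_antisymm (dset_subset h21) (dset_subset h12)⟩
    · rintro ⟨hC, hD⟩
      exact ⟨gcont_of_sets h₁mono h₁lc h₂mono h₂lc hC hD,
             gcont_of_sets h₂mono h₂lc h₁mono h₁lc hC.symm hD.symm⟩
  have tau : (GCont g₂ g₁ ∧ GCont g₁ g₂) ↔ tauTop g₁ = tauTop g₂ := by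
    constructor
    · rintro ⟨h21, h12⟩
      exact le_antisymm (tau_le_of_gcont h12) (tau_le_of_gcont h21)
    · intro ht
      exact ⟨gcont_of_tau_le ht.ge, gcont_of_tau_le ht.le⟩
  exact ⟨main, main.symm.trans tau⟩
end

section
/- Let g₁, …, gₙ be derivators. The following are equivalent: (i) every g⃗-continuous map f: A ⊆ ℝ → ℝ^n (continuity with respect to the pseudometric max_i |g_i(s) − g_i(t)|) is componentwise g_i-continuous (f_i is g_i-continuous for each i); (ii) for all j, k ∈ {1,…,n}, g_k is g_j-continuous; (iii) for all j, k, C_{g_j} = C_{g_k} and D_{g_j} = D_{g_k}. -/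
open Set

lemma cset_const {h : ℝ → ℝ} {s₁ s₂ : ℝ} (hle : s₁ ≤ s₂)
    (hC : ∀ x ∈ Set.Icc s₁ s₂, x ∈ CSet h) : h s₂ = h s₁ := by
  set T : Set ℝ := {x | x ∈ Set.Icc s₁ s₂ ∧ h x = h s₁} with hT
  have hne : T.Nonempty := ⟨s₁, ⟨le_refl _, hle⟩, rfl⟩
  have hbdd : BddAbove T := ⟨s₂, fun x hx => hx.1.2⟩
  set m := sSup T with hm
  have hmmem : m ∈ Set.Icc s₁ s₂ :=
    ⟨le_csSup hbdd ⟨⟨le_refl _, hle⟩, rfl⟩, csSup_le hne fun x hx => hx.1.2⟩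
  obtain ⟨ε, hε, hconst⟩ := hC m hmmem
  have hhm : h m = h s₁ := by
    obtain ⟨x, hx, hxlt⟩ := exists_lt_of_lt_csSup hne (by linarith : m - ε < m)
    have hxle : x ≤ m := le_csSup hbdd hx
    rcases eq_or_lt_of_le hxle with rfl | hlt
    · exact hx.2
    · rw [← hx.2, hconst x ⟨hxlt, by linarith⟩]
  have hms : m = s₂ := by
    by_contra hne2
    have hmlt : m < s₂ := lt_of_le_of_ne hmmem.2 hne2
    set y := min (m + ε/2) s₂ with hy
    have hy1 : m < y := lt_min (by linarith) hmlt
    have hy2 : y ≤ s₂ := min_le_right _ _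
    have hy3 : y < m + ε := lt_of_le_of_lt (min_le_left _ _) (by linarith)
    have hyT : y ∈ T :=
      ⟨⟨le_trans hmmem.1 hy1.le, hy2⟩, by rw [hconst y ⟨by linarith, hy3⟩, hhm]⟩
    exact absurd (le_csSup hbdd hyT) (not_le.mpr hy1)
  rw [← hms, hhm]

lemma eq_of_left_lim {h : ℝ → ℝ} {t c : ℝ} (hl : ContinuousWithinAt h (Set.Iio t) t)
    (hev : ∀ᶠ s in nhdsWithin t (Set.Iio t), h s = c) : h t = c :=
  tendsto_nhds_unique hl (tendsto_const_nhds.congr' (hev.mono fun s hs => hs.symm))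

lemma eq_of_right_lim {h : ℝ → ℝ} {t c : ℝ} (hr : ContinuousWithinAt h (Set.Ioi t) t)
    (hev : ∀ᶠ s in nhdsWithin t (Set.Ioi t), h s = c) : h t = c :=
  tendsto_nhds_unique hr (tendsto_const_nhds.congr' (hev.mono fun s hs => hs.symm))

lemma mem_cset_of_const {g : ℝ → ℝ} {u v y c : ℝ} (huy : u < y) (hyv : y < v)
    (hconst : ∀ z ∈ Set.Icc u v, g z = c) : y ∈ CSet g := by
  refine ⟨min (y - u) (v - y), lt_min (by linarith) (by linarith), fun z hz => ?_⟩
  have hmu := min_le_left (y - u) (v - y)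
  have hmv := min_le_right (y - u) (v - y)
  have h1 : u < z := by have := hz.1; linarith
  have h2 : z < v := by have := hz.2; linarith
  rw [hconst z ⟨h1.le, h2.le⟩, hconst y ⟨huy.le, hyv.le⟩]

lemma transfer_left {g h : ℝ → ℝ} (hhl : LeftCont h) (hC : CSet g = CSet h)
    {t x : ℝ} (hxt : x < t) (hconst : ∀ y ∈ Set.Icc x t, g y = g t) :
    ∀ y ∈ Set.Ioo x t, h y = h t := by
  have hCmem : ∀ y ∈ Set.Ioo x t, y ∈ CSet h := fun y hy =>
    hC ▸ mem_cset_of_const hy.1 hy.2 hconst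
  intro y hy
  have hev : ∀ᶠ s in nhdsWithin t (Set.Iio t), h s = h y := by
    filter_upwards [Ioo_mem_nhdsLT_of_mem (⟨hy.2, le_refl t⟩ : t ∈ Set.Ioc y t)] with s hs
    exact cset_const hs.1.le fun z hz =>
      hCmem z ⟨lt_of_lt_of_le hy.1 hz.1, lt_of_le_of_lt hz.2 hs.2⟩
  exact (eq_of_left_lim (hhl t) hev).symm

lemma transfer_right {g h : ℝ → ℝ} (hgl : LeftCont g) (hhl : LeftCont h)
    (hC : CSet g = CSet h) (hD : DSet g = DSet h)
    {t x : ℝ} (htx : t < x) (hconst : ∀ y ∈ Set.Icc t x, g y = g t) :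
    ∀ y ∈ Set.Icc t x, h y = h t := by
  have hgc : ContinuousAt g t := by
    rw [continuousAt_iff_continuous_left'_right']
    refine ⟨hgl t, ?_⟩
    have hev : (fun _ : ℝ => g t) =ᶠ[nhdsWithin t (Set.Ioi t)] g := by
      filter_upwards [Ioo_mem_nhdsGT_of_mem (⟨le_refl t, htx⟩ : t ∈ Set.Ico t x)] with s hs
      exact (hconst s ⟨hs.1.le, hs.2.le⟩).symm
    exact (continuousWithinAt_const (b := g t)).congr_of_eventuallyEq hev.symm
      (hconst t ⟨le_refl _, htx.le⟩)
  have hhc : ContinuousAt h t := by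
    have h1 : t ∉ DSet g := fun hc => hc hgc
    rw [hD] at h1
    exact not_not.mp h1
  have hCmem : ∀ y ∈ Set.Ioo t x, y ∈ CSet h := fun y hy =>
    hC ▸ mem_cset_of_const hy.1 hy.2 hconst
  have hpair : ∀ y ∈ Set.Ioo t x, ∀ z ∈ Set.Ioo t x, h y = h z := by
    intro y hy z hz
    rcases le_total z y with hzy | hyz
    · exact cset_const hzy fun w hw =>
        hCmem w ⟨lt_of_lt_of_le hz.1 hw.1, lt_of_le_of_lt hw.2 hy.2⟩
    · exact (cset_const hyz fun w hw =>
        hCmem w ⟨lt_of_lt_of_le hy.1 hw.1, lt_of_le_of_lt hw.2 hz.2⟩).symm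
  set p := (t + x) / 2 with hp
  have hpmem : p ∈ Set.Ioo t x := ⟨by simp [hp]; linarith, by simp [hp]; linarith⟩
  have htp : h t = h p := by
    refine eq_of_right_lim hhc.continuousWithinAt ?_
    filter_upwards [Ioo_mem_nhdsGT_of_mem (⟨le_refl t, htx⟩ : t ∈ Set.Ico t x)] with s hs
    exact hpair s hs p hpmem
  have hxp : h x = h p := by
    refine eq_of_left_lim (hhl x) ?_
    filter_upwards [Ioo_mem_nhdsLT_of_mem (⟨htx, le_refl x⟩ : x ∈ Set.Ioc t x)] with s hs
    exact hpair s hs p hpmem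
  intro y hy
  rcases eq_or_lt_of_le hy.1 with rfl | hty
  · rfl
  rcases eq_or_lt_of_le hy.2 with rfl | hyx
  · rw [hxp, ← htp]
  · rw [hpair y ⟨hty, hyx⟩ p hpmem, ← htp]
lemma cont_of_right_const {g : ℝ → ℝ} (hgl : LeftCont g) {t x : ℝ} (htx : t < x)
    (hconst : ∀ y ∈ Set.Icc t x, g y = g t) : ContinuousAt g t := by
  rw [continuousAt_iff_continuous_left'_right']
  refine ⟨hgl t, ?_⟩
  have hev : (fun _ : ℝ => g t) =ᶠ[nhdsWithin t (Set.Ioi t)] g := by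
    filter_upwards [Ioo_mem_nhdsGT_of_mem (⟨le_refl t, htx⟩ : t ∈ Set.Ico t x)] with s hs
    exact (hconst s ⟨hs.1.le, hs.2.le⟩).symm
  exact (continuousWithinAt_const (b := g t)).congr_of_eventuallyEq hev.symm
    (hconst t ⟨le_refl _, htx.le⟩)

lemma jump_of_discont {g : ℝ → ℝ} (hgm : Monotone g) (hgl : LeftCont g) {b : ℝ}
    (hd : ¬ ContinuousAt g b) : ∃ δ > 0, ∀ s, b < s → g b + δ ≤ g s := by
  by_contra hcon
  push_neg at hcon
  apply hd
  rw [continuousAt_iff_continuous_left'_right']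
  refine ⟨hgl b, ?_⟩
  rw [Metric.continuousWithinAt_iff]
  intro ε hε
  obtain ⟨s₀, hs₀, hgs₀⟩ := hcon ε hε
  refine ⟨s₀ - b, by linarith, fun {x} hx hdist => ?_⟩
  rw [Real.dist_eq] at hdist ⊢
  have hxb : (b : ℝ) < x := hx
  have hxs₀ : x ≤ s₀ := by
    have : x - b < s₀ - b := lt_of_le_of_lt (le_abs_self _) hdist
    linarith
  have h1 : g b ≤ g x := hgm hxb.le
  have h2 : g x ≤ g s₀ := hgm hxs₀
  rw [abs_of_nonneg (by linarith)]
  linarith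

lemma key_left {g h : ℝ → ℝ} (hgm : Monotone g) (hhm : Monotone h)
    (hgl : LeftCont g) (hhl : LeftCont h)
    (hC : CSet g = CSet h) (hD : DSet g = DSet h) (t : ℝ) {ε : ℝ} (hε : 0 < ε) :
    ∃ δ > 0, ∀ s < t, |g s - g t| < δ → |h s - h t| < ε := by
  set S : Set ℝ := {s | s ≤ t ∧ g s = g t} with hS
  have htS : t ∈ S := ⟨le_refl t, rfl⟩
  have htrans : ∀ s, s < t → (∃ x ∈ S, x < s) → h s = h t := by
    rintro s hst ⟨x, hxS, hxs⟩
    have hxt : x < t := lt_trans hxs hst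
    have hconst : ∀ y ∈ Set.Icc x t, g y = g t :=
      fun y hy => le_antisymm (hgm hy.2) (hxS.2 ▸ hgm hy.1)
    exact transfer_left hhl hC hxt hconst s ⟨hxs, hst⟩
  by_cases hbdd : BddBelow S
  · set a := sInf S with ha
    have hat : a ≤ t := csInf_le hbdd htS
    have hfact2 : ∀ s, a < s → s < t → h s = h t := by
      intro s has hst
      obtain ⟨x, hxS, hxs⟩ := exists_lt_of_csInf_lt ⟨t, htS⟩ has
      exact htrans s hst ⟨x, hxS, hxs⟩
    have hnotS : ∀ s, s < a → s ≤ t → g s < g t := by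
      intro s hsa hst
      rcases lt_or_eq_of_le (hgm hst) with h1 | h1
      · exact h1
      · exact absurd (csInf_le hbdd ⟨hst, h1⟩) (not_le.mpr hsa)
    rcases eq_or_lt_of_le hat with haeq | halt
    · -- a = t : use left continuity of h at t
      obtain ⟨η, hη, Hη⟩ := Metric.continuousWithinAt_iff.mp (hhl t) ε hε
      have hgd : g (t - η/2) < g t := hnotS _ (by rw [haeq]; linarith) (by linarith)
      refine ⟨g t - g (t - η/2), by linarith, fun s hst habs => ?_⟩
      have h1 : g t - g s < g t - g (t - η/2) := (abs_sub_lt_iff.mp habs).2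
      have h2 : g (t - η/2) < g s := by linarith
      have h3 : t - η/2 < s := by
        by_contra hc
        exact absurd (hgm (not_lt.mp hc)) (not_le.mpr h2)
      have := Hη (Set.mem_Iio.mpr hst) (by rw [Real.dist_eq, abs_of_nonpos (by linarith)]; linarith)
      rwa [Real.dist_eq] at this
    · -- a < t
      have hgat : g a ≤ g t := hgm hat
      rcases lt_or_eq_of_le hgat with hgalt | hgaeq
      · refine ⟨g t - g a, by linarith, fun s hst habs => ?_⟩
        have h1 : g t - g s < g t - g a := (abs_sub_lt_iff.mp habs).2
        have h2 : a < s := by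
          by_contra hc
          exact absurd (hgm (not_lt.mp hc)) (not_le.mpr (by linarith))
        rw [hfact2 s h2 hst, sub_self, abs_zero]; exact hε
      · -- g a = g t : a is a minimum, h continuous at a
        have hconst : ∀ y ∈ Set.Icc a t, g y = g a :=
          fun y hy => le_antisymm (hgaeq ▸ hgm hy.2) (hgm hy.1)
        have htr := transfer_right hgl hhl hC hD halt hconst
        have hht : h t = h a := htr t ⟨hat, le_refl t⟩
        have hgca : ContinuousAt g a := cont_of_right_const hgl halt hconst
        have hhca : ContinuousAt h a := by
          have h1 : a ∉ DSet g := fun hc => hc hgca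
          rw [hD] at h1
          exact not_not.mp h1
        obtain ⟨η, hη, Hη⟩ := Metric.continuousAt_iff.mp hhca ε hε
        have hgd : g (a - η/2) < g t := hnotS _ (by linarith) (by linarith)
        refine ⟨g t - g (a - η/2), by linarith, fun s hst habs => ?_⟩
        have h1 : g t - g s < g t - g (a - η/2) := (abs_sub_lt_iff.mp habs).2
        have h3 : a - η/2 < s := by
          by_contra hc
          exact absurd (hgm (not_lt.mp hc)) (not_le.mpr (by linarith))
        rcases le_or_gt s a with hsa | has
        · have := Hη (x := s) (by rw [Real.dist_eq, abs_of_nonpos (by linarith)]; linarith)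
          rw [Real.dist_eq] at this
          calc |h s - h t| = |h s - h a| := by rw [hht]
          _ < ε := this
        · rw [hfact2 s has hst, sub_self, abs_zero]; exact hε
  · -- S unbounded below
    refine ⟨1, one_pos, fun s hst _ => ?_⟩
    obtain ⟨x, hxS, hxs⟩ := not_bddBelow_iff.mp hbdd s
    rw [htrans s hst ⟨x, hxS, hxs⟩, sub_self, abs_zero]; exact hε

lemma key_right {g h : ℝ → ℝ} (hgm : Monotone g) (hhm : Monotone h)
    (hgl : LeftCont g) (hhl : LeftCont h)
    (hC : CSet g = CSet h) (hD : DSet g = DSet h) (t : ℝ) {ε : ℝ} (hε : 0 < ε) :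
    ∃ δ > 0, ∀ s, t < s → |g s - g t| < δ → |h s - h t| < ε := by
  set S : Set ℝ := {s | t ≤ s ∧ g s = g t} with hS
  have htS : t ∈ S := ⟨le_refl t, rfl⟩
  have hconst_of : ∀ x ∈ S, ∀ y ∈ Set.Icc t x, g y = g t :=
    fun x hxS y hy => le_antisymm (hxS.2 ▸ hgm hy.2) (hgm hy.1)
  have htrans : ∀ s, t < s → (∃ x ∈ S, s < x) → h s = h t := by
    rintro s hts ⟨x, hxS, hsx⟩
    have htx : t < x := lt_trans hts hsx
    exact transfer_right hgl hhl hC hD htx (hconst_of x hxS) s ⟨hts.le, hsx.le⟩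
  by_cases hbdd : BddAbove S
  · set b := sSup S with hb
    have htb : t ≤ b := le_csSup hbdd htS
    have hgb : g b = g t := by
      rcases eq_or_lt_of_le htb with haeq | halt
      · rw [← haeq]
      · refine eq_of_left_lim (hgl b) ?_
        filter_upwards [Ioo_mem_nhdsLT_of_mem (⟨halt, le_refl b⟩ : b ∈ Set.Ioc t b)] with y hy
        obtain ⟨x, hxS, hyx⟩ := exists_lt_of_lt_csSup ⟨t, htS⟩ hy.2
        exact hconst_of x hxS y ⟨hy.1.le, hyx.le⟩
    have hbS : b ∈ S := ⟨htb, hgb⟩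
    have hfactr : ∀ s, t < s → s ≤ b → h s = h t := by
      intro s hts hsb
      have htb' : t < b := lt_of_lt_of_le hts hsb
      exact transfer_right hgl hhl hC hD htb' (hconst_of b hbS) s ⟨hts.le, hsb⟩
    have hnotS : ∀ s, b < s → g t < g s := by
      intro s hbs
      rcases lt_or_eq_of_le (hgm (le_trans htb hbs.le)) with h1 | h1
      · exact h1
      · exact absurd (le_csSup hbdd ⟨le_trans htb hbs.le, h1.symm⟩) (not_le.mpr hbs)
    by_cases hcb : ContinuousAt g b
    · have hhcb : ContinuousAt h b := by
        have h1 : b ∉ DSet g := fun hc => hc hcb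
        rw [hD] at h1
        exact not_not.mp h1
      have hhb : h b = h t := by
        rcases eq_or_lt_of_le htb with haeq | halt
        · rw [← haeq]
        · exact hfactr b halt (le_refl b)
      obtain ⟨η, hη, Hη⟩ := Metric.continuousAt_iff.mp hhcb ε hε
      have hgd : g t < g (b + η/2) := hnotS _ (by linarith)
      refine ⟨g (b + η/2) - g t, by linarith, fun s hts habs => ?_⟩
      have h1 : g s - g t < g (b + η/2) - g t := (abs_sub_lt_iff.mp habs).1
      have h3 : s < b + η/2 := by
        by_contra hc
        exact absurd (hgm (not_lt.mp hc)) (not_le.mpr (by linarith))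
      rcases le_or_gt s b with hsb | hbs
      · rw [hfactr s hts hsb, sub_self, abs_zero]; exact hε
      · have := Hη (x := s) (by rw [Real.dist_eq, abs_of_nonneg (by linarith)]; linarith)
        rw [Real.dist_eq] at this
        calc |h s - h t| = |h s - h b| := by rw [hhb]
        _ < ε := this
    · obtain ⟨δ₀, hδ₀, Hδ₀⟩ := jump_of_discont hgm hgl hcb
      refine ⟨δ₀, hδ₀, fun s hts habs => ?_⟩
      have h1 : g s - g t < δ₀ := (abs_sub_lt_iff.mp habs).1
      rcases le_or_gt s b with hsb | hbs
      · rw [hfactr s hts hsb, sub_self, abs_zero]; exact hε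
      · exact absurd (Hδ₀ s hbs) (not_le.mpr (by rw [hgb]; linarith))
  · refine ⟨1, one_pos, fun s hts _ => ?_⟩
    obtain ⟨x, hxS, hsx⟩ := not_bddAbove_iff.mp hbdd s
    rw [htrans s hts ⟨x, hxS, hsx⟩, sub_self, abs_zero]; exact hε

lemma key {g h : ℝ → ℝ} (hgm : Monotone g) (hhm : Monotone h)
    (hgl : LeftCont g) (hhl : LeftCont h)
    (hC : CSet g = CSet h) (hD : DSet g = DSet h) :
    ∀ t : ℝ, ∀ ε > 0, ∃ δ > 0, ∀ s : ℝ, |g s - g t| < δ → |h s - h t| < ε := by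
  intro t ε hε
  obtain ⟨δL, hδL, HL⟩ := key_left hgm hhm hgl hhl hC hD t hε
  obtain ⟨δR, hδR, HR⟩ := key_right hgm hhm hgl hhl hC hD t hε
  refine ⟨min δL δR, lt_min hδL hδR, fun s habs => ?_⟩
  rcases lt_trichotomy s t with hst | rfl | hts
  · exact HL s hst (lt_of_lt_of_le habs (min_le_left _ _))
  · rw [sub_self, abs_zero]; exact hε
  · exact HR s hts (lt_of_lt_of_le habs (min_le_right _ _))
/-- Equivalence of: (i) every `g⃗`-continuous map (with respect to the pseudometric
`max_i |gᵢ s - gᵢ t|`, i.e. the sup norm) is componentwise `gᵢ`-continuous;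
(ii) each `g_k` is `g_j`-continuous; (iii) all `C_{g_j}` coincide and all
`D_{g_j}` coincide. -/
theorem stmt12 (n : ℕ) (g : Fin n → ℝ → ℝ)
    (hmono : ∀ i, Monotone (g i)) (hlc : ∀ i, LeftCont (g i)) :
    ((∀ (A : Set ℝ) (f : ℝ → Fin n → ℝ),
        (∀ t ∈ A, ∀ ε > 0, ∃ δ > 0, ∀ s ∈ A,
          ‖(fun i => g i s - g i t : Fin n → ℝ)‖ < δ → ‖f s - f t‖ < ε) →
        (∀ i, ∀ t ∈ A, ∀ ε > 0, ∃ δ > 0, ∀ s ∈ A,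
          |g i s - g i t| < δ → |f s i - f t i| < ε)) ↔
      (∀ j k : Fin n, ∀ t : ℝ, ∀ ε > 0, ∃ δ > 0, ∀ s : ℝ,
        |g j s - g j t| < δ → |g k s - g k t| < ε)) ∧
    ((∀ j k : Fin n, ∀ t : ℝ, ∀ ε > 0, ∃ δ > 0, ∀ s : ℝ,
        |g j s - g j t| < δ → |g k s - g k t| < ε) ↔
      (∀ j k : Fin n, CSet (g j) = CSet (g k) ∧ DSet (g j) = DSet (g k))) := by
  refine ⟨⟨?_, ?_⟩, ?_, ?_⟩
  · -- (i) → (ii)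
    intro hi j k t ε hε
    haveI : Nonempty (Fin n) := ⟨j⟩
    have hpre : ∀ t ∈ Set.univ, ∀ ε > 0, ∃ δ > 0, ∀ s ∈ Set.univ,
        ‖(fun i => g i s - g i t : Fin n → ℝ)‖ < δ →
        ‖(fun s : ℝ => fun _ : Fin n => g k s) s - (fun s : ℝ => fun _ : Fin n => g k s) t‖ < ε := by
      intro t _ ε hε
      refine ⟨ε, hε, fun s _ hnorm => ?_⟩
      have h1 : ((fun s : ℝ => fun _ : Fin n => g k s) s - (fun s : ℝ => fun _ : Fin n => g k s) t)
          = fun _ : Fin n => g k s - g k t := rfl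
      rw [h1, pi_norm_const, Real.norm_eq_abs]
      calc |g k s - g k t| = ‖(fun i => g i s - g i t : Fin n → ℝ) k‖ := (Real.norm_eq_abs _).symm
      _ ≤ ‖(fun i => g i s - g i t : Fin n → ℝ)‖ := norm_le_pi_norm (fun i => g i s - g i t : Fin n → ℝ) k
      _ < ε := hnorm
    obtain ⟨δ, hδ, H⟩ := hi Set.univ (fun s _ => g k s) hpre j t (Set.mem_univ t) ε hε
    exact ⟨δ, hδ, fun s habs => H s (Set.mem_univ s) habs⟩
  · -- (ii) → (i)
    intro hii A f hf i t ht ε hε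
    haveI : Nonempty (Fin n) := ⟨i⟩
    obtain ⟨δ, hδ, H⟩ := hf t ht ε hε
    choose δf hδf Hf using fun k => hii i k t δ hδ
    refine ⟨Finset.univ.inf' Finset.univ_nonempty δf, ?_, fun s hs habs => ?_⟩
    · exact (Finset.lt_inf'_iff Finset.univ_nonempty).mpr fun k _ => hδf k
    · have hcomp : ∀ k, |g k s - g k t| < δ := fun k =>
        Hf k s (lt_of_lt_of_le habs (Finset.inf'_le _ (Finset.mem_univ k)))
      have hnorm : ‖(fun k => g k s - g k t : Fin n → ℝ)‖ < δ :=
        (pi_norm_lt_iff hδ).mpr fun k => by rw [Real.norm_eq_abs]; exact hcomp k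
      have hlt := H s hs hnorm
      calc |f s i - f t i| = ‖(f s - f t) i‖ := by rw [Real.norm_eq_abs]; rfl
      _ ≤ ‖f s - f t‖ := norm_le_pi_norm _ i
      _ < ε := hlt
  · -- (ii) → (iii)
    intro hii j k
    have hCsub : ∀ j' k' : Fin n, CSet (g j') ⊆ CSet (g k') := by
      rintro j' k' t ⟨ε₀, hε₀, hconst⟩
      refine ⟨ε₀, hε₀, fun s hs => ?_⟩
      by_contra hne
      have habs : 0 < |g k' s - g k' t| := abs_pos.mpr (sub_ne_zero.mpr hne)
      obtain ⟨δ, hδ, H⟩ := hii j' k' t _ habs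
      exact lt_irrefl _ (H s (by rw [hconst s hs, sub_self, abs_zero]; exact hδ))
    have hcont : ∀ j' k' : Fin n, ∀ t, ContinuousAt (g j') t → ContinuousAt (g k') t := by
      intro j' k' t hcj
      rw [Metric.continuousAt_iff] at hcj ⊢
      intro ε hε
      obtain ⟨δ, hδ, H⟩ := hii j' k' t ε hε
      obtain ⟨δ', hδ', H'⟩ := hcj δ hδ
      refine ⟨δ', hδ', fun {x} hx => ?_⟩
      have h2 := H' hx
      rw [Real.dist_eq] at h2 ⊢
      exact H x h2
    refine ⟨Set.Subset.antisymm (hCsub j k) (hCsub k j), Set.ext fun t => ?_⟩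
    exact ⟨fun h1 hc => h1 (hcont k j t hc), fun h1 hc => h1 (hcont j k t hc)⟩
  · -- (iii) → (ii)
    intro hiii j k t ε hε
    exact key (hmono j) (hmono k) (hlc j) (hlc k) (hiii j k).1 (hiii j k).2 t ε hε
end

section
/- Let g be a derivator and f: A ⊆ ℝ → ℝ be g-continuous on A. Then: (1) f is left-continuous at every interior point of A where left limits make sense; (2) f is continuous at every t ∈ A at which g is continuous; (3) f is constant on every interval [c, d] ⊆ A on which g is constant. -/
open Set

/-- Basic properties of a `g`-continuous function `f` on `A`: left-continuity at
interior points, continuity at continuity points of `g`, and constancy on intervals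
where `g` is constant. -/
theorem stmt14 (g : ℝ → ℝ) (hmono : Monotone g) (hlc : LeftCont g)
    (A : Set ℝ) (f : ℝ → ℝ)
    (hf : ∀ t ∈ A, ∀ ε > 0, ∃ δ > 0, ∀ s ∈ A, |g s - g t| < δ → |f s - f t| < ε) :
    (∀ t ∈ interior A, ContinuousWithinAt f (A ∩ Set.Iio t) t) ∧
    (∀ t ∈ A, ContinuousAt g t → ContinuousWithinAt f A t) ∧
    (∀ c d : ℝ, Set.Icc c d ⊆ A → (∀ x ∈ Set.Icc c d, g x = g c) →
      ∀ x ∈ Set.Icc c d, f x = f c) := by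
  refine ⟨?_, ?_, ?_⟩
  · intro t ht
    have htA : t ∈ A := interior_subset ht
    rw [Metric.continuousWithinAt_iff]
    intro ε hε
    obtain ⟨δ, hδ, hδf⟩ := hf t htA ε hε
    have := (hlc t)
    rw [Metric.continuousWithinAt_iff] at this
    obtain ⟨δ', hδ', hg⟩ := this δ hδ
    refine ⟨δ', hδ', fun {s} hs hdist => ?_⟩
    have : |g s - g t| < δ := by
      have := hg hs.2 hdist
      rwa [Real.dist_eq] at this
    have := hδf s hs.1 this
    rwa [Real.dist_eq]
  · intro t ht hgt
    rw [Metric.continuousWithinAt_iff]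
    intro ε hε
    obtain ⟨δ, hδ, hδf⟩ := hf t ht ε hε
    rw [Metric.continuousAt_iff] at hgt
    obtain ⟨δ', hδ', hg⟩ := hgt δ hδ
    refine ⟨δ', hδ', fun {s} hs hdist => ?_⟩
    have : |g s - g t| < δ := by
      have := hg hdist
      rwa [Real.dist_eq] at this
    have := hδf s hs this
    rwa [Real.dist_eq]
  · intro c d hsub hgconst x hx
    by_contra hne
    have hpos : |f x - f c| > 0 := abs_pos.mpr (sub_ne_zero.mpr hne)
    obtain ⟨δ, hδ, hδf⟩ := hf c (hsub (Set.left_mem_Icc.mpr (hx.1.trans hx.2))) _ hpos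
    have : |g x - g c| < δ := by
      rw [hgconst x hx]; simpa using hδ
    exact absurd (hδf x (hsub hx) this) (lt_irrefl _)
end

section
/- Let g₁, …, gₙ be derivators, A ⊆ ℝ a Borel set, and f: A → ℝ^n be g⃗-continuous on A. Then f is Borel measurable. -/
open Set MeasureTheory

/-- A `g⃗`-continuous function on a Borel set `A` is Borel measurable. -/
theorem stmt16 (n : ℕ) (g : Fin n → ℝ → ℝ)
    (hmono : ∀ i, Monotone (g i)) (hlc : ∀ i, LeftCont (g i))
    (A : Set ℝ) (hA : MeasurableSet A) (f : ℝ → Fin n → ℝ)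
    (hf : ∀ t ∈ A, ∀ ε > 0, ∃ δ > 0, ∀ s ∈ A,
      ‖(fun i => g i s - g i t : Fin n → ℝ)‖ < δ → ‖f s - f t‖ < ε) :
    Measurable (fun t : A => f t) := by
  classical
  set G : ℝ → (Fin n → ℝ) := fun t i => g i t with hG
  have hGmeas : Measurable G :=
    measurable_pi_lambda _ (fun i => (hmono i).measurable)
  -- key: G s = G t → f s = f t (for s, t in A)
  have key : ∀ s ∈ A, ∀ t ∈ A, G s = G t → f s = f t := by
    intro s hs t ht hst
    have hnorm : ∀ ε > (0:ℝ), ‖f s - f t‖ < ε := by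
      intro ε hε
      obtain ⟨δ, hδ, hδ2⟩ := hf t ht ε hε
      apply hδ2 s hs
      have : (fun i => g i s - g i t : Fin n → ℝ) = G s - G t := rfl
      rw [this, hst, sub_self, norm_zero]; exact hδ
    have : ‖f s - f t‖ ≤ 0 := by
      by_contra h
      push_neg at h
      exact absurd (hnorm _ h) (lt_irrefl _)
    have := le_antisymm this (norm_nonneg _)
    rwa [norm_eq_zero, sub_eq_zero] at this
  -- define h on the image
  set h : (Fin n → ℝ) → (Fin n → ℝ) := fun y =>
    if hy : ∃ t, t ∈ A ∧ G t = y then f hy.choose else 0 with hh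
  have hval : ∀ t ∈ A, h (G t) = f t := by
    intro t ht
    have hy : ∃ s, s ∈ A ∧ G s = G t := ⟨t, ht, rfl⟩
    simp only [hh, dif_pos hy]
    exact key _ hy.choose_spec.1 _ ht hy.choose_spec.2
  -- h is continuous on G '' A
  have hcont : ContinuousOn h (G '' A) := by
    rw [Metric.continuousOn_iff]
    rintro y ⟨t, ht, rfl⟩ ε hε
    obtain ⟨δ, hδ, hδ2⟩ := hf t ht ε hε
    refine ⟨δ, hδ, ?_⟩
    rintro y' ⟨s, hs, rfl⟩ hdist
    rw [hval s hs, hval t ht, dist_eq_norm]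
    apply hδ2 s hs
    have : (fun i => g i s - g i t : Fin n → ℝ) = G s - G t := rfl
    rw [this, ← dist_eq_norm]
    exact hdist
  -- now compose
  have hfac : (fun t : A => f t) = ((G '' A).restrict h) ∘
      (fun t : A => (⟨G t, ⟨t, t.2, rfl⟩⟩ : G '' A)) := by
    funext t
    simp [Set.restrict, hval t t.2]
  rw [hfac]
  exact (hcont.restrict.measurable).comp
    ((hGmeas.comp measurable_subtype_coe).subtype_mk)
end

section
/- (Osgood uniqueness for systems with several Stieltjes derivatives) Let g₁, …, gₙ be derivators, t₀ ∈ ℝ, σ > 0, I_σ = [t₀, t₀+σ), X ⊆ ℝ^n with x₀ ∈ X, and f = (f₁,…,fₙ): I_σ × X → ℝ^n. Let ω: [0,∞) → [0,∞) be continuous nondecreasing with ω(0)=0, ω(s)>0 for s>0, and lim_{ε→0⁺} ∫_ε^{u₀} ds/ω(s) = +∞ for some u₀ > 0. Suppose for each i, |f_i(t,x) − f_i(t,y)| ≤ ω(‖x−y‖_∞) for μ_{g_i}-a.e. t ∈ I_σ and all x, y ∈ X. Then the initial value problem (x_i)'_{g_i}(t) = f_i(t, x(t)) μ_{g_i}-a.e.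 with x(t₀) = x₀ has at most one solution x ∈ AC_g(closure(I_σ), ℝ^n). -/
open Set MeasureTheory intervalIntegral Filter

/-- `x` is a solution of the system `(x_i)'_{g_i}(t) = f_i(t, x(t))`, `x(t₀) = x₀`, on
`I_σ = [t₀, t₀+σ)`, where `μ i` is the Lebesgue–Stieltjes measure of the derivator
`g i`:  `x(t₀) = x₀`, `x(t) ∈ X` on `I_σ`, and each component `x_i` is `g_i`-absolutely
continuous, i.e. it is the integral of an `L¹(μ_i)` function `y` which agrees
`μ_i`-a.e. on `I_σ` with `f_i(t, x(t))`. -/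
def IsSolution (n : ℕ) (μ : Fin n → Measure ℝ) (t₀ σ : ℝ) (X : Set (Fin n → ℝ))
    (x₀ : Fin n → ℝ) (f : ℝ → (Fin n → ℝ) → Fin n → ℝ) (x : ℝ → Fin n → ℝ) : Prop :=
  x t₀ = x₀ ∧ (∀ t ∈ Set.Ico t₀ (t₀ + σ), x t ∈ X) ∧
  ∀ i : Fin n, ∃ y : ℝ → ℝ,
    IntegrableOn y (Set.Ico t₀ (t₀ + σ)) (μ i) ∧
    (∀ t ∈ Set.Icc t₀ (t₀ + σ), x t i = x₀ i + ∫ s in Set.Ico t₀ t, y s ∂(μ i)) ∧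
    (∀ᵐ t ∂(μ i).restrict (Set.Ico t₀ (t₀ + σ)), y t = f t (x t) i)

open Set MeasureTheory intervalIntegral Filter Topology

lemma real_le_of_forall_pos_le_add {a b : ℝ} (h : ∀ ε : ℝ, 0 < ε → a ≤ b + ε) : a ≤ b := by
  by_contra hc
  push_neg at hc
  have := h ((a - b) / 2) (by linarith)
  linarith

lemma max_sub_max_le {ε a b : ℝ} (hab : a ≤ b) : max ε b - max ε a ≤ b - a := by
  rcases le_total b ε with h | h
  · have h1 : max ε b = ε := max_eq_left h
    have h2 : max ε a = ε := max_eq_left (hab.trans h)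
    simp [h1, h2]; linarith
  · have h1 : max ε b = b := max_eq_right h
    rcases le_total a ε with h3 | h3
    · have h4 : max ε a = ε := max_eq_left h3
      simp [h1, h4]; linarith
    · have h4 : max ε a = a := max_eq_right h3
      simp [h1, h4]

lemma integral_Ico_measurable (μ : Measure ℝ) (w : ℝ → ℝ) (hw : Integrable w μ) (t₀ : ℝ) :
    Measurable fun t => ∫ s in Ico t₀ t, w s ∂μ := by
  have hmono : ∀ v : ℝ → ℝ, Integrable v μ → (∀ s, 0 ≤ v s) →
      Monotone fun t => ∫ s in Ico t₀ t, v s ∂μ := by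
    intro v hv h0 a b hab
    exact setIntegral_mono_set hv.integrableOn (ae_of_all _ h0)
      ((Ico_subset_Ico_right hab).eventuallyLE)
  have h1 := (hmono _ hw.pos_part (fun s => le_max_right _ _)).measurable
  have h2 := (hmono _ hw.neg.pos_part (fun s => le_max_right _ _)).measurable
  have key : ∀ t : ℝ, ∫ s in Ico t₀ t, w s ∂μ =
      (∫ s in Ico t₀ t, max (w s) 0 ∂μ) - ∫ s in Ico t₀ t, max (-w s) 0 ∂μ := by
    intro t
    rw [show (fun s => max (-w s) 0) = (fun s => max ((-w) s) 0) from rfl,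
      ← integral_sub hw.pos_part.integrableOn hw.neg.pos_part.integrableOn]
    apply setIntegral_congr_fun measurableSet_Ico
    intro s _
    simp
  simp only [key]
  exact h1.sub h2
set_option maxHeartbeats 2000000 in
theorem stmt18' (n : ℕ) (g : Fin n → ℝ → ℝ)
    (hmono : ∀ i, Monotone (g i)) (hlc : ∀ i, ∀ t : ℝ, ContinuousWithinAt (g i) (Set.Iio t) t)
    (μ : Fin n → Measure ℝ)
    (hμ : ∀ i, ∀ a b : ℝ, a ≤ b →
      μ i (Set.Ico a b) = ENNReal.ofReal (g i b - g i a))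
    (t₀ σ : ℝ) (hσ : 0 < σ)
    (X : Set (Fin n → ℝ)) (x₀ : Fin n → ℝ) (hx₀ : x₀ ∈ X)
    (f : ℝ → (Fin n → ℝ) → Fin n → ℝ)
    (ω : ℝ → ℝ) (hωc : ContinuousOn ω (Set.Ici 0)) (hωm : MonotoneOn ω (Set.Ici 0))
    (hω0 : ω 0 = 0) (hωpos : ∀ s : ℝ, 0 < s → 0 < ω s)
    (u₀ : ℝ) (hu₀ : 0 < u₀)
    (hOsgood : Tendsto (fun ε => ∫ s in ε..u₀, 1 / ω s)
      (nhdsWithin (0 : ℝ) (Set.Ioi 0)) atTop)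
    (hlip : ∀ i : Fin n, ∀ᵐ t ∂(μ i).restrict (Set.Ico t₀ (t₀ + σ)),
      ∀ x ∈ X, ∀ y ∈ X, |f t x i - f t y i| ≤ ω ‖x - y‖)
    (x y : ℝ → Fin n → ℝ)
    (hx0 : x t₀ = x₀) (hxX : ∀ t ∈ Set.Ico t₀ (t₀ + σ), x t ∈ X)
    (hy0 : y t₀ = x₀) (hyX : ∀ t ∈ Set.Ico t₀ (t₀ + σ), y t ∈ X)
    (yx yy : Fin n → ℝ → ℝ)
    (hyxI : ∀ i, IntegrableOn (yx i) (Set.Ico t₀ (t₀ + σ)) (μ i))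
    (hyyI : ∀ i, IntegrableOn (yy i) (Set.Ico t₀ (t₀ + σ)) (μ i))
    (hyxF : ∀ i, ∀ t ∈ Set.Icc t₀ (t₀ + σ), x t i = x₀ i + ∫ s in Set.Ico t₀ t, yx i s ∂(μ i))
    (hyyF : ∀ i, ∀ t ∈ Set.Icc t₀ (t₀ + σ), y t i = x₀ i + ∫ s in Set.Ico t₀ t, yy i s ∂(μ i))
    (hyxE : ∀ i, ∀ᵐ t ∂(μ i).restrict (Set.Ico t₀ (t₀ + σ)), yx i t = f t (x t) i)
    (hyyE : ∀ i, ∀ᵐ t ∂(μ i).restrict (Set.Ico t₀ (t₀ + σ)), yy i t = f t (y t) i) :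
    ∀ t ∈ Set.Icc t₀ (t₀ + σ), x t = y t := by
  -- ### basic measure facts
  have hμfin : ∀ (i : Fin n) (a b : ℝ), μ i (Ico a b) ≠ ⊤ := by
    intro i a b
    rcases le_total a b with h | h
    · rw [hμ i a b h]; exact ENNReal.ofReal_ne_top
    · rw [Ico_eq_empty (not_lt.mpr h)]; simp
  have hfinsub : ∀ (i : Fin n) (S : Set ℝ) (a b : ℝ), S ⊆ Ico a b → μ i S ≠ ⊤ := by
    intro i S a b hS
    exact ne_top_of_le_ne_top (hμfin i a b) (measure_mono hS)
  -- ### the modified modulus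
  set ωt : ℝ → ℝ := fun s => ω (max s 0) with hωt_def
  have hωtc : Continuous ωt :=
    hωc.comp_continuous (continuous_id.max continuous_const) fun s => mem_Ici.2 (le_max_right _ _)
  have hωtm : Monotone ωt := fun a b hab =>
    hωm (mem_Ici.2 (le_max_right _ _)) (mem_Ici.2 (le_max_right _ _)) (max_le_max hab le_rfl)
  have hωtnn : ∀ s, 0 ≤ ωt s := by
    intro s
    have := hωm (mem_Ici.2 le_rfl) (mem_Ici.2 (le_max_right s 0)) (le_max_right s 0)
    simpa [hω0] using this
  have hωteq : ∀ s : ℝ, 0 ≤ s → ωt s = ω s := by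
    intro s hs
    simp only [hωt_def, max_eq_left hs]
  -- ### measurable surrogates for the solutions
  set wx : Fin n → ℝ → ℝ := fun i => (Ico t₀ (t₀ + σ)).indicator (yx i) with hwx_def
  set wy : Fin n → ℝ → ℝ := fun i => (Ico t₀ (t₀ + σ)).indicator (yy i) with hwy_def
  have hwxI : ∀ i, Integrable (wx i) (μ i) := fun i =>
    (hyxI i).integrable_indicator measurableSet_Ico
  have hwyI : ∀ i, Integrable (wy i) (μ i) := fun i =>
    (hyyI i).integrable_indicator measurableSet_Ico
  set Xt : Fin n → ℝ → ℝ := fun i t => x₀ i + ∫ s in Ico t₀ t, wx i s ∂(μ i) with hXt_def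
  set Yt : Fin n → ℝ → ℝ := fun i t => x₀ i + ∫ s in Ico t₀ t, wy i s ∂(μ i) with hYt_def
  have hXt : ∀ t ∈ Icc t₀ (t₀ + σ), ∀ i, x t i = Xt i t := by
    intro t ht i
    show x t i = x₀ i + ∫ s in Ico t₀ t, wx i s ∂(μ i)
    rw [hyxF i t ht]
    congr 1
    refine setIntegral_congr_fun measurableSet_Ico fun s hs => ?_
    simp only [hwx_def]
    rw [Set.indicator_of_mem (show s ∈ Ico t₀ (t₀ + σ) from ⟨hs.1, lt_of_lt_of_le hs.2 ht.2⟩)]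
  have hYt : ∀ t ∈ Icc t₀ (t₀ + σ), ∀ i, y t i = Yt i t := by
    intro t ht i
    show y t i = x₀ i + ∫ s in Ico t₀ t, wy i s ∂(μ i)
    rw [hyyF i t ht]
    congr 1
    refine setIntegral_congr_fun measurableSet_Ico fun s hs => ?_
    simp only [hwy_def]
    rw [Set.indicator_of_mem (show s ∈ Ico t₀ (t₀ + σ) from ⟨hs.1, lt_of_lt_of_le hs.2 ht.2⟩)]
  have hXtm : ∀ i, Measurable (Xt i) := fun i =>
    measurable_const.add (integral_Ico_measurable (μ i) (wx i) (hwxI i) t₀)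
  have hYtm : ∀ i, Measurable (Yt i) := fun i =>
    measurable_const.add (integral_Ico_measurable (μ i) (wy i) (hwyI i) t₀)
  set d : ℝ → ℝ := fun t => ‖(fun i => Xt i t) - (fun i => Yt i t)‖ with hd_def
  have hdm : Measurable d := by
    apply Measurable.norm (f := fun t => (fun i => Xt i t) - (fun i => Yt i t))
    rw [measurable_pi_iff]
    intro i
    exact (hXtm i).sub (hYtm i)
  have hd_eq : ∀ t ∈ Icc t₀ (t₀ + σ), d t = ‖x t - y t‖ := by
    intro t ht
    have : (fun i => Xt i t) - (fun i => Yt i t) = x t - y t := by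
      funext i
      simp only [Pi.sub_apply]
      rw [← hXt t ht i, ← hYt t ht i]
    rw [hd_def]
    simp only [this]
  have hd0 : ∀ t, 0 ≤ d t := fun t => norm_nonneg _
  -- ### a uniform bound on d
  set H : ℝ := ∑ i, ((∫ s in Ico t₀ (t₀ + σ), |yx i s| ∂(μ i)) +
      ∫ s in Ico t₀ (t₀ + σ), |yy i s| ∂(μ i)) with hH_def
  have hterm_nn : ∀ i : Fin n, 0 ≤ (∫ s in Ico t₀ (t₀ + σ), |yx i s| ∂(μ i)) +
      ∫ s in Ico t₀ (t₀ + σ), |yy i s| ∂(μ i) := fun i =>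
    add_nonneg (integral_nonneg fun s => abs_nonneg _) (integral_nonneg fun s => abs_nonneg _)
  have hH0 : 0 ≤ H := Finset.sum_nonneg fun i _ => hterm_nn i
  have hdH : ∀ t, d t ≤ H := by
    intro t
    show ‖(fun i => Xt i t) - (fun i => Yt i t)‖ ≤ H
    refine (pi_norm_le_iff_of_nonneg hH0).mpr fun i => ?_
    simp only [Pi.sub_apply, Real.norm_eq_abs, hXt_def, hYt_def]
    have hb : ∀ (v : ℝ → ℝ), IntegrableOn v (Ico t₀ (t₀ + σ)) (μ i) →
        |∫ s in Ico t₀ t, (Ico t₀ (t₀ + σ)).indicator v s ∂(μ i)| ≤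
          ∫ s in Ico t₀ (t₀ + σ), |v s| ∂(μ i) := by
      intro v hv
      have h1 : |∫ s in Ico t₀ t, (Ico t₀ (t₀ + σ)).indicator v s ∂(μ i)| ≤
          ∫ s in Ico t₀ t, |(Ico t₀ (t₀ + σ)).indicator v s| ∂(μ i) := by
        simpa [Real.norm_eq_abs] using
          MeasureTheory.norm_integral_le_integral_norm (μ := (μ i).restrict (Ico t₀ t))
            (f := fun s => (Ico t₀ (t₀ + σ)).indicator v s)
      have h2 : (∫ s in Ico t₀ t, |(Ico t₀ (t₀ + σ)).indicator v s| ∂(μ i)) ≤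
          ∫ s, |(Ico t₀ (t₀ + σ)).indicator v s| ∂(μ i) :=
        setIntegral_le_integral (hv.integrable_indicator measurableSet_Ico).abs
          (ae_of_all _ fun s => abs_nonneg _)
      have h3 : (∫ s, |(Ico t₀ (t₀ + σ)).indicator v s| ∂(μ i)) =
          ∫ s in Ico t₀ (t₀ + σ), |v s| ∂(μ i) := by
        rw [← MeasureTheory.integral_indicator measurableSet_Ico]
        congr 1
        funext s
        by_cases hs : s ∈ Ico t₀ (t₀ + σ) <;>
          simp [indicator_of_mem, indicator_of_notMem, hs]
      linarith
    have hbx := hb (yx i) (hyxI i)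
    have hby := hb (yy i) (hyyI i)
    have : |(x₀ i + ∫ s in Ico t₀ t, wx i s ∂(μ i)) - (x₀ i + ∫ s in Ico t₀ t, wy i s ∂(μ i))| ≤
        (∫ s in Ico t₀ (t₀ + σ), |yx i s| ∂(μ i)) + ∫ s in Ico t₀ (t₀ + σ), |yy i s| ∂(μ i) := by
      rw [hwx_def, hwy_def]
      simp only
      calc |(x₀ i + ∫ s in Ico t₀ t, (Ico t₀ (t₀ + σ)).indicator (yx i) s ∂(μ i)) -
            (x₀ i + ∫ s in Ico t₀ t, (Ico t₀ (t₀ + σ)).indicator (yy i) s ∂(μ i))| =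
          |(∫ s in Ico t₀ t, (Ico t₀ (t₀ + σ)).indicator (yx i) s ∂(μ i)) -
            ∫ s in Ico t₀ t, (Ico t₀ (t₀ + σ)).indicator (yy i) s ∂(μ i)| := by congr 1; ring
        _ ≤ _ := (abs_sub _ _).trans (add_le_add hbx hby)
    exact this.trans (Finset.single_le_sum (fun j _ => hterm_nn j) (Finset.mem_univ i))
  -- ### the agreement set
  set A : Set ℝ := {t | t ∈ Icc t₀ (t₀ + σ) ∧ ∀ s ∈ Icc t₀ t, x s = y s} with hA_def
  have hA0 : t₀ ∈ A := by
    refine ⟨⟨le_refl _, by linarith⟩, fun s hs => ?_⟩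
    have : s = t₀ := le_antisymm hs.2 hs.1
    rw [this, hx0, hy0]
  have hAbdd : BddAbove A := ⟨t₀ + σ, fun t ht => ht.1.2⟩
  set τ : ℝ := sSup A with hτ_def
  have hτ1 : t₀ ≤ τ := le_csSup hAbdd hA0
  have hτ2 : τ ≤ t₀ + σ := csSup_le ⟨t₀, hA0⟩ fun t ht => ht.1.2
  have hbelow : ∀ s, t₀ ≤ s → s < τ → x s = y s := by
    intro s hs1 hs2
    obtain ⟨t, htA, hst⟩ := exists_lt_of_lt_csSup ⟨t₀, hA0⟩ hs2
    exact htA.2 s ⟨hs1, hst.le⟩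
  have heqAt : ∀ T, t₀ ≤ T → T ≤ t₀ + σ → (∀ s, t₀ ≤ s → s < T → x s = y s) → x T = y T := by
    intro T h1 h2 hbel
    funext i
    rw [hyxF i T ⟨h1, h2⟩, hyyF i T ⟨h1, h2⟩]
    congr 1
    apply MeasureTheory.integral_congr_ae
    have e1 : ∀ᵐ s ∂(μ i).restrict (Ico t₀ T), yx i s = f s (x s) i :=
      ae_restrict_of_ae_restrict_of_subset (Ico_subset_Ico_right h2) (hyxE i)
    have e2 : ∀ᵐ s ∂(μ i).restrict (Ico t₀ T), yy i s = f s (y s) i :=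
      ae_restrict_of_ae_restrict_of_subset (Ico_subset_Ico_right h2) (hyyE i)
    filter_upwards [e1, e2, ae_restrict_mem measurableSet_Ico] with s hs1 hs2 hs3
    rw [hs1, hs2, hbel s hs3.1 hs3.2]
  have hτA : ∀ s ∈ Icc t₀ τ, x s = y s := by
    intro s hs
    rcases lt_or_eq_of_le hs.2 with h | h
    · exact hbelow s hs.1 h
    · rw [h]; exact heqAt τ hτ1 hτ2 hbelow
  rcases eq_or_lt_of_le hτ2 with hfin | hτlt
  · intro t ht
    exact hτA t ⟨ht.1, by rw [hfin]; exact ht.2⟩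
  exfalso
  have heqτ : x τ = y τ := hτA τ ⟨hτ1, le_refl _⟩
  -- ### the comparison function R and the measure bookkeeping
  set G : ℝ → ℝ := fun t => ∑ i, g i t with hG_def
  have hGm : Monotone G := fun a b hab => Finset.sum_le_sum fun i _ => hmono i hab
  have hIntS : ∀ (i : Fin n) (S : Set ℝ), MeasurableSet S → μ i S ≠ ⊤ →
      IntegrableOn (fun s => ωt (d s)) S (μ i) := by
    intro i S hS hfin
    have hfm : IsFiniteMeasure ((μ i).restrict S) := by
      constructor
      rw [Measure.restrict_apply_univ]
      exact lt_top_iff_ne_top.2 hfin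
    refine Integrable.mono' (integrable_const (ωt H)) ?_ (ae_of_all _ fun s => ?_)
    · exact ((hωtc.measurable.comp hdm)).aestronglyMeasurable
    · rw [Real.norm_eq_abs, abs_of_nonneg (hωtnn _)]
      exact hωtm (hdH s)
  have hIntIoo : ∀ (i : Fin n) (a b : ℝ), IntegrableOn (fun s => ωt (d s)) (Ioo a b) (μ i) :=
    fun i a b => hIntS i _ measurableSet_Ioo (hfinsub i _ a b Ioo_subset_Ico_self)
  have hIntIco : ∀ (i : Fin n) (a b : ℝ), IntegrableOn (fun s => ωt (d s)) (Ico a b) (μ i) :=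
    fun i a b => hIntS i _ measurableSet_Ico (hfinsub i _ a b (subset_refl _))
  have hIntsing : ∀ (i : Fin n) (a : ℝ), IntegrableOn (fun s => ωt (d s)) {a} (μ i) :=
    fun i a => hIntS i _ (measurableSet_singleton a)
      (hfinsub i _ a (a + 1) (singleton_subset_iff.2 ⟨le_refl _, lt_add_one a⟩))
  have hboundC : ∀ (i : Fin n) (S : Set ℝ) (a b : ℝ), S ⊆ Ico a b → MeasurableSet S →
      ∀ C : ℝ, (∀ s ∈ S, ωt (d s) ≤ C) →
      (∫ s in S, ωt (d s) ∂(μ i)) ≤ C * (μ i S).toReal := by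
    intro i S a b hSab hSm C hC
    have hfin : μ i S < ⊤ := (hfinsub i S a b hSab).lt_top
    have := norm_setIntegral_le_of_norm_le_const (μ := μ i) (s := S) hfin
      (f := fun s => ωt (d s)) (C := C) (fun s hs => by
        rw [Real.norm_eq_abs, abs_of_nonneg (hωtnn _)]; exact hC s hs)
    exact (le_abs_self _).trans (by simpa [Real.norm_eq_abs, measureReal_def] using this)
  set R : ℝ → ℝ := fun t => ∑ i, ∫ s in Ioo τ t, ωt (d s) ∂(μ i) with hR_def
  have hRmono : Monotone R := by
    intro a b hab
    refine Finset.sum_le_sum fun i _ => ?_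
    exact setIntegral_mono_set (hIntIoo i τ b) (ae_of_all _ fun s => hωtnn _)
      ((Ioo_subset_Ioo_right hab).eventuallyLE)
  have hR0 : ∀ t, 0 ≤ R t := fun t =>
    Finset.sum_nonneg fun i _ => setIntegral_nonneg measurableSet_Ioo fun s _ => hωtnn _
  -- the sums over shrinking right-neighbourhoods vanish
  have hshrink : ∀ T b η : ℝ, T < b → 0 < η →
      ∃ a, T < a ∧ a < b ∧ ∑ i, (∫ s in Ioo T a, ωt (d s) ∂(μ i)) ≤ η := by
    intro T b η hTb hη
    set c : ℕ → ℝ := fun k => T + (b - T) / (k + 2) with hc_def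
    have hbT : 0 < b - T := by linarith
    have hc1 : ∀ k : ℕ, T < c k := by
      intro k
      have : 0 < (b - T) / (k + 2) := div_pos hbT (by positivity)
      simp only [hc_def]; linarith
    have hc2 : ∀ k : ℕ, c k < b := by
      intro k
      have h2 : (b - T) / (k + 2) < b - T := by
        apply div_lt_self hbT
        have : (0:ℝ) ≤ (k:ℝ) := Nat.cast_nonneg k
        linarith
      simp only [hc_def]; linarith
    have hcanti : Antitone fun k : ℕ => Ioo T (c k) := by
      intro k l hkl
      apply Ioo_subset_Ioo_right
      simp only [hc_def]
      have : (b - T) / (l + 2) ≤ (b - T) / (k + 2) := by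
        apply div_le_div_of_nonneg_left hbT.le (by positivity)
        have : (k:ℝ) ≤ (l:ℝ) := Nat.cast_le.2 hkl
        linarith
      linarith
    have hiInter : (⋂ k : ℕ, Ioo T (c k)) = ∅ := by
      ext s
      simp only [mem_iInter, mem_empty_iff_false, iff_false, not_forall]
      by_contra hs
      push_neg at hs
      have h1 : T < s := (hs 0).1
      have htend : Tendsto c atTop (𝓝 T) := by
        have h2 : Tendsto (fun k : ℕ => (b - T) / ((k:ℝ) + 2)) atTop (𝓝 0) := by
          apply Tendsto.div_atTop (tendsto_const_nhds)
          exact tendsto_atTop_add_const_right _ 2 tendsto_natCast_atTop_atTop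
        have h3 := h2.const_add T
        simp only [add_zero] at h3
        simpa [hc_def] using h3
      obtain ⟨k, hk⟩ := (htend.eventually_lt_const h1).exists
      exact absurd (hs k).2 (not_lt.2 hk.le)
    have hμt : ∀ i : Fin n, Tendsto (fun k => ((μ i) (Ioo T (c k))).toReal) atTop (𝓝 0) := by
      intro i
      have h := tendsto_measure_iInter_atTop (μ := μ i)
        (fun k => measurableSet_Ioo.nullMeasurableSet) hcanti
        ⟨0, hfinsub i _ T (c 0) Ioo_subset_Ico_self⟩
      rw [hiInter] at h
      simp only [measure_empty] at h
      have h2 := (ENNReal.tendsto_toReal (by simp : (0:ENNReal) ≠ ⊤)).comp h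
      exact h2
    have hsum : Tendsto (fun k => ωt H * ∑ i, ((μ i) (Ioo T (c k))).toReal) atTop (𝓝 0) := by
      have := tendsto_finset_sum (Finset.univ : Finset (Fin n)) (fun i _ => hμt i)
      simpa using (this.const_mul (ωt H))
    obtain ⟨k, hk⟩ := (hsum.eventually_lt_const hη).exists
    refine ⟨c k, hc1 k, hc2 k, ?_⟩
    have hb : ∀ i : Fin n, (∫ s in Ioo T (c k), ωt (d s) ∂(μ i)) ≤ ωt H * ((μ i) (Ioo T (c k))).toReal := by
      intro i
      exact hboundC i _ T (c k) Ioo_subset_Ico_self measurableSet_Ioo (ωt H)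
        (fun s _ => hωtm (hdH s))
    calc ∑ i, (∫ s in Ioo T (c k), ωt (d s) ∂(μ i))
        ≤ ∑ i, ωt H * ((μ i) (Ioo T (c k))).toReal := Finset.sum_le_sum fun i _ => hb i
      _ = ωt H * ∑ i, ((μ i) (Ioo T (c k))).toReal := by rw [Finset.mul_sum]
      _ ≤ η := hk.le
  -- atoms
  set m : ℝ → ℝ := fun T => ∑ i, ((μ i) {T}).toReal with hm_def
  have hm0 : ∀ T, 0 ≤ m T := fun T => Finset.sum_nonneg fun i _ => ENNReal.toReal_nonneg
  have hsing_fin : ∀ (i : Fin n) (T : ℝ), μ i {T} ≠ ⊤ := fun i T =>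
    hfinsub i _ T (T + 1) (singleton_subset_iff.2 ⟨le_refl _, lt_add_one T⟩)
  have hdisj1 : ∀ T t : ℝ, Disjoint {T} (Ioo T t) := by
    intro T t
    rw [Set.disjoint_left]
    rintro s rfl hs2
    exact lt_irrefl _ hs2.1
  have hIcoadd : ∀ (i : Fin n) (T t : ℝ), T < t →
      ((μ i) {T}).toReal + ((μ i) (Ioo T t)).toReal = g i t - g i T := by
    intro i T t hTt
    rw [← ENNReal.toReal_add (hsing_fin i T) (hfinsub i _ T t Ioo_subset_Ico_self),
      ← measure_union (hdisj1 T t) measurableSet_Ioo, ← Set.insert_eq, Ioo_insert_left hTt,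
      hμ i T t hTt.le, ENNReal.toReal_ofReal (sub_nonneg.2 (hmono i hTt.le))]
  have hmle : ∀ T t : ℝ, T < t → m T ≤ G t - G T := by
    intro T t hTt
    have h1 : ∀ i : Fin n, ((μ i) {T}).toReal ≤ g i t - g i T := by
      intro i
      have := hIcoadd i T t hTt
      have h2 : 0 ≤ ((μ i) (Ioo T t)).toReal := ENNReal.toReal_nonneg
      linarith
    calc m T = ∑ i, ((μ i) {T}).toReal := by rw [hm_def]
      _ ≤ ∑ i, (g i t - g i T) := Finset.sum_le_sum fun i _ => h1 i
      _ = G t - G T := by rw [hG_def]; simp [Finset.sum_sub_distrib]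
  have hIooMeq : ∀ T t : ℝ, T < t →
      ∑ i, ((μ i) (Ioo T t)).toReal = (G t - G T) - m T := by
    intro T t hTt
    have : ∑ i, (((μ i) {T}).toReal + ((μ i) (Ioo T t)).toReal) = G t - G T := by
      rw [Finset.sum_congr rfl fun i _ => hIcoadd i T t hTt, hG_def]
      simp [Finset.sum_sub_distrib]
    rw [Finset.sum_add_distrib] at this
    simp only [hm_def]
    linarith
  have hIooM0 : ∀ T t : ℝ, 0 ≤ ∑ i, ((μ i) (Ioo T t)).toReal := fun T t =>
    Finset.sum_nonneg fun i _ => ENNReal.toReal_nonneg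
  -- the splitting identity for R
  have hRsplit : ∀ T t : ℝ, τ < T → T < t →
      R t = R T + ωt (d T) * m T + ∑ i, (∫ s in Ioo T t, ωt (d s) ∂(μ i)) := by
    intro T t hτT hTt
    have hsplit : ∀ i : Fin n, (∫ s in Ioo τ t, ωt (d s) ∂(μ i)) =
        (∫ s in Ioo τ T, ωt (d s) ∂(μ i)) + (ωt (d T) * ((μ i) {T}).toReal +
          ∫ s in Ioo T t, ωt (d s) ∂(μ i)) := by
      intro i
      have hdisj0 : Disjoint (Ioo τ T) (Ico T t) := by
        rw [Set.disjoint_left]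
        intro s hs1 hs2
        exact absurd hs2.1 (not_le.2 hs1.2)
      rw [← Ioo_union_Ico_eq_Ioo hτT hTt.le,
        MeasureTheory.setIntegral_union hdisj0 measurableSet_Ico (hIntIoo i τ T) (hIntIco i T t)]
      congr 1
      rw [← Ioo_insert_left hTt, Set.insert_eq,
        MeasureTheory.setIntegral_union (hdisj1 T t) measurableSet_Ioo (hIntsing i T) (hIntIoo i T t),
        MeasureTheory.integral_singleton]
      simp [smul_eq_mul, mul_comm, measureReal_def]
    simp only [hR_def]
    rw [Finset.sum_congr rfl fun i _ => hsplit i, Finset.sum_add_distrib,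
      Finset.sum_add_distrib, ← Finset.mul_sum]
    simp only [hm_def]
    ring
  -- ### the fundamental estimate d t ≤ R t on (τ, t₀+σ]
  have hdR : ∀ t : ℝ, τ < t → t ≤ t₀ + σ → d t ≤ R t := by
    intro t hτt htσ
    have htIcc : t ∈ Icc t₀ (t₀ + σ) := ⟨hτ1.trans hτt.le, htσ⟩
    rw [hd_eq t htIcc]
    refine (pi_norm_le_iff_of_nonneg (hR0 t)).mpr fun i => ?_
    have hIyx0 : IntegrableOn (fun s => yx i s - yy i s) (Ico t₀ (t₀ + σ)) (μ i) :=
      (hyxI i).sub (hyyI i)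
    have hIyx : IntegrableOn (fun s => yx i s - yy i s) (Ico t₀ t) (μ i) :=
      hIyx0.mono_set (Ico_subset_Ico_right htσ)
    have hsub : x t i - y t i = ∫ s in Ico t₀ t, (yx i s - yy i s) ∂(μ i) := by
      rw [hyxF i t htIcc, hyyF i t htIcc,
        MeasureTheory.integral_sub ((hyxI i).mono_set (Ico_subset_Ico_right htσ))
          ((hyyI i).mono_set (Ico_subset_Ico_right htσ))]
      ring
    have hI1 : (∫ s in Ico t₀ τ, (yx i s - yy i s) ∂(μ i)) = 0 := by
      apply integral_eq_zero_of_ae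
      have e1 : ∀ᵐ s ∂(μ i).restrict (Ico t₀ τ), yx i s = f s (x s) i :=
        ae_restrict_of_ae_restrict_of_subset (Ico_subset_Ico_right hτ2) (hyxE i)
      have e2 : ∀ᵐ s ∂(μ i).restrict (Ico t₀ τ), yy i s = f s (y s) i :=
        ae_restrict_of_ae_restrict_of_subset (Ico_subset_Ico_right hτ2) (hyyE i)
      filter_upwards [e1, e2, ae_restrict_mem measurableSet_Ico] with s hs1 hs2 hs3
      simp only [Pi.zero_apply]
      rw [hs1, hs2, hbelow s hs3.1 hs3.2]
      ring
    have hI2 : (∫ s in {τ}, (yx i s - yy i s) ∂(μ i)) = 0 := by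
      apply integral_eq_zero_of_ae
      have hss : {τ} ⊆ Ico t₀ (t₀ + σ) := singleton_subset_iff.2 ⟨hτ1, hτlt⟩
      filter_upwards [ae_restrict_of_ae_restrict_of_subset hss (hyxE i),
        ae_restrict_of_ae_restrict_of_subset hss (hyyE i),
        ae_restrict_mem (measurableSet_singleton τ)] with s hs1 hs2 hs3
      rw [mem_singleton_iff] at hs3
      subst hs3
      simp only [Pi.zero_apply]
      rw [hs1, hs2, heqτ]
      ring
    have hdisj0 : Disjoint (Ico t₀ τ) (Ico τ t) := by
      rw [Set.disjoint_left]
      intro s hs1 hs2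
      exact absurd hs2.1 (not_le.2 hs1.2)
    have key : x t i - y t i = ∫ s in Ioo τ t, (yx i s - yy i s) ∂(μ i) := by
      rw [hsub, ← Ico_union_Ico_eq_Ico hτ1 hτt.le,
        MeasureTheory.setIntegral_union hdisj0 measurableSet_Ico
          (hIyx.mono_set (by rw [← Ico_union_Ico_eq_Ico hτ1 hτt.le]; exact subset_union_left))
          (hIyx.mono_set (by rw [← Ico_union_Ico_eq_Ico hτ1 hτt.le]; exact subset_union_right)),
        hI1, zero_add, ← Ioo_insert_left hτt, Set.insert_eq,
        MeasureTheory.setIntegral_union (hdisj1 τ t) measurableSet_Ioo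
          (hIyx.mono_set (fun s hs => by
            rw [mem_singleton_iff] at hs; exact hs ▸ ⟨hτ1, hτt⟩))
          (hIyx.mono_set (fun s hs => ⟨hτ1.trans hs.1.le, hs.2⟩)),
        hI2, zero_add]
    have hsub2 : Ioo τ t ⊆ Ico t₀ (t₀ + σ) := fun s hs =>
      ⟨hτ1.trans hs.1.le, lt_of_lt_of_le hs.2 htσ⟩
    rw [Pi.sub_apply, Real.norm_eq_abs, key]
    have habs : |∫ s in Ioo τ t, (yx i s - yy i s) ∂(μ i)| ≤
        ∫ s in Ioo τ t, |yx i s - yy i s| ∂(μ i) := by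
      simpa [Real.norm_eq_abs] using
        MeasureTheory.norm_integral_le_integral_norm (μ := (μ i).restrict (Ioo τ t))
          (f := fun s => yx i s - yy i s)
    have hmono2 : (∫ s in Ioo τ t, |yx i s - yy i s| ∂(μ i)) ≤
        ∫ s in Ioo τ t, ωt (d s) ∂(μ i) := by
      apply MeasureTheory.integral_mono_ae
        ((hIyx.mono_set (fun s hs => ⟨hτ1.trans hs.1.le, hs.2⟩)).abs)
        (hIntIoo i τ t)
      filter_upwards [ae_restrict_of_ae_restrict_of_subset hsub2 (hyxE i),
        ae_restrict_of_ae_restrict_of_subset hsub2 (hyyE i),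
        ae_restrict_of_ae_restrict_of_subset hsub2 (hlip i),
        ae_restrict_mem measurableSet_Ioo] with s hs1 hs2 hs3 hs4
      have hmem : s ∈ Ico t₀ (t₀ + σ) := hsub2 hs4
      rw [hs1, hs2]
      calc |f s (x s) i - f s (y s) i| ≤ ω ‖x s - y s‖ :=
            hs3 (x s) (hxX s hmem) (y s) (hyX s hmem)
        _ = ωt (d s) := by rw [hd_eq s ⟨hmem.1, hmem.2.le⟩, hωteq _ (norm_nonneg _)]
    refine (habs.trans hmono2).trans ?_
    simp only [hR_def]
    exact Finset.single_le_sum (f := fun j : Fin n => ∫ s in Ioo τ t, ωt (d s) ∂(μ j))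
      (fun j _ => setIntegral_nonneg measurableSet_Ioo fun s _ => hωtnn _) (Finset.mem_univ i)
  -- crude growth bound for R
  have hRdiff : ∀ s t : ℝ, τ < s → s ≤ t → R t - R s ≤ ωt H * (G t - G s) := by
    intro s t hτs hst
    rcases eq_or_lt_of_le hst with rfl | hst'
    · simp
    have hsplit := hRsplit s t hτs hst'
    have h1 : ωt (d s) * m s ≤ ωt H * m s :=
      mul_le_mul_of_nonneg_right (hωtm (hdH s)) (hm0 s)
    have h2 : ∑ i, (∫ u in Ioo s t, ωt (d u) ∂(μ i)) ≤
        ωt H * ∑ i, ((μ i) (Ioo s t)).toReal := by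
      rw [Finset.mul_sum]
      refine Finset.sum_le_sum fun i _ => ?_
      exact hboundC i _ s t Ioo_subset_Ico_self measurableSet_Ioo (ωt H)
        (fun u _ => hωtm (hdH u))
    have h3 := hIooMeq s t hst'
    have h4 := hmle s t hst'
    have h5 := hm0 s
    nlinarith [hωtnn H]
  -- ### choice of t₂ and t₁
  obtain ⟨t₂, hτt₂, ht₂σ, hRt₂⟩ := hshrink τ (t₀ + σ) (u₀ / 2) hτlt (by linarith)
  have hRt₂' : R t₂ ≤ u₀ / 2 := by
    have : R t₂ = ∑ i, ∫ s in Ioo τ t₂, ωt (d s) ∂(μ i) := by rw [hR_def]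
    rw [this]; exact hRt₂
  obtain ⟨t₁, hτt₁, ht₁t₂, hxyt₁⟩ : ∃ t₁, τ < t₁ ∧ t₁ < t₂ ∧ x t₁ ≠ y t₁ := by
    by_contra hc
    push_neg at hc
    have hmem : (τ + t₂) / 2 ∈ A := by
      constructor
      · constructor
        · linarith
        · linarith
      · intro s hs
        rcases le_or_gt s τ with h | h
        · exact hτA s ⟨hs.1, h⟩
        · refine hc s h ?_
          have := hs.2
          linarith
    have := le_csSup hAbdd hmem
    simp only [← hτ_def] at this
    linarith
  have ht₁σ : t₁ < t₀ + σ := ht₁t₂.trans ht₂σ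
  have ht₁Icc : t₁ ∈ Icc t₀ (t₀ + σ) := ⟨hτ1.trans hτt₁.le, ht₁σ.le⟩
  have hdt₁ : 0 < d t₁ := by
    rw [hd_eq t₁ ht₁Icc]
    exact norm_pos_iff.mpr (sub_ne_zero_of_ne hxyt₁)
  have hdRt₁ : d t₁ ≤ R t₁ := hdR t₁ hτt₁ ht₁σ.le
  have hRt₁u₀ : R t₁ < u₀ := lt_of_le_of_lt (hRmono ht₁t₂.le) (by linarith)
  -- ### interval integral toolkit
  have hωtpos : ∀ ε s : ℝ, 0 < ε → ε ≤ s → 0 < ωt s := by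
    intro ε s hε hεs
    have h1 : 0 < ω ε := hωpos ε hε
    have h2 : ωt ε = ω ε := hωteq ε hε.le
    exact lt_of_lt_of_le (h2 ▸ h1) (hωtm hεs)
  have hiiG : ∀ ε u v : ℝ, 0 < ε → ε ≤ u → ε ≤ v →
      IntervalIntegrable (fun s => (ωt s)⁻¹) volume u v := by
    intro ε u v hε hu hv
    apply ContinuousOn.intervalIntegrable
    apply ContinuousOn.inv₀ (hωtc.continuousOn)
    intro s hs
    rw [Set.mem_uIcc] at hs
    have hεs : ε ≤ s := by
      rcases hs with ⟨h1, _⟩ | ⟨h1, _⟩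
      exacts [hu.trans h1, hv.trans h1]
    exact (hωtpos ε s hε hεs).ne'
  have hchordG : ∀ ε u v : ℝ, 0 < ε → ε ≤ u → u ≤ v →
      (∫ s in u..v, (ωt s)⁻¹) ≤ (v - u) / ωt u := by
    intro ε u v hε hu huv
    have h := intervalIntegral.integral_mono_on (g := fun _ => (ωt u)⁻¹) huv
      (hiiG ε u v hε hu (hu.trans huv)) intervalIntegrable_const
      (fun s hs => inv_anti₀ (hωtpos ε u hε hu) (hωtm hs.1))
    rw [intervalIntegral.integral_const, smul_eq_mul] at h
    rw [div_eq_mul_inv]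
    exact h
  have hΦaddG : ∀ ε u v : ℝ, 0 < ε → ε ≤ u → u ≤ v →
      (∫ s in ε..v, (ωt s)⁻¹) = (∫ s in ε..u, (ωt s)⁻¹) + ∫ s in u..v, (ωt s)⁻¹ :=
    fun ε u v hε hu huv =>
      (integral_add_adjacent_intervals (hiiG ε ε u hε le_rfl hu)
        (hiiG ε u v hε hu (hu.trans huv))).symm
  -- ### the key Osgood estimate
  have key : ∀ ε : ℝ, 0 < ε → ε < d t₁ →
      (∫ s in ε..(R t₁), (ωt s)⁻¹) ≤ 2 * (G (t₀ + σ) - G t₀) := by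
    intro ε hε hεd
    have hωε : 0 < ωt ε := hωtpos ε ε hε le_rfl
    obtain ⟨a, hτa, hat₁, hRa⟩ := hshrink τ t₁ ε hτt₁ hε
    have hRa' : R a ≤ ε := by simp only [hR_def]; exact hRa
    have hPa : (∫ u in ε..(max ε (R a)), (ωt u)⁻¹) ≤ 2 * (G a - G a) := by
      rw [max_eq_left hRa', intervalIntegral.integral_same]
      simp
    set S : Set ℝ := {t | t ∈ Icc a t₁ ∧ ∀ s ∈ Icc a t,
      (∫ u in ε..(max ε (R s)), (ωt u)⁻¹) ≤ 2 * (G s - G a)} with hS_def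
    have hSa : a ∈ S := by
      refine ⟨⟨le_refl _, hat₁.le⟩, fun s hs => ?_⟩
      have hsa : s = a := le_antisymm hs.2 hs.1
      rw [hsa]
      exact hPa
    have hSbdd : BddAbove S := ⟨t₁, fun t ht => ht.1.2⟩
    set T : ℝ := sSup S with hT_def
    have hTa : a ≤ T := le_csSup hSbdd hSa
    have hTt₁ : T ≤ t₁ := csSup_le ⟨a, hSa⟩ fun t ht => ht.1.2
    have hτT : τ < T := lt_of_lt_of_le hτa hTa
    have hPlow : ∀ s, a ≤ s → s < T →
        (∫ u in ε..(max ε (R s)), (ωt u)⁻¹) ≤ 2 * (G s - G a) := by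
      intro s hs1 hs2
      obtain ⟨t, htS, hst⟩ := exists_lt_of_lt_csSup ⟨a, hSa⟩ hs2
      exact htS.2 s ⟨hs1, hst.le⟩
    have hPT : (∫ u in ε..(max ε (R T)), (ωt u)⁻¹) ≤ 2 * (G T - G a) := by
      rcases eq_or_lt_of_le hTa with h | haT
      · rw [← h]
        exact hPa
      refine real_le_of_forall_pos_le_add fun ρ hρ => ?_
      set K : ℝ := ωt H / ωt ε with hK_def
      have hK0 : 0 ≤ K := div_nonneg (hωtnn H) hωε.le
      have hGlcT : Tendsto G (𝓝[<] T) (𝓝 (G T)) := by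
        have h1 := tendsto_finset_sum (Finset.univ : Finset (Fin n))
          (fun i _ => (hlc i T : Tendsto (g i) (𝓝[<] T) (𝓝 (g i T))))
        simpa [hG_def] using h1
      have hev : ∀ᶠ s in 𝓝[<] T, G T - G s < ρ / (K + 1) := by
        have h2 : Tendsto (fun s => G T - G s) (𝓝[<] T) (𝓝 (G T - G T)) :=
          tendsto_const_nhds.sub hGlcT
        rw [sub_self] at h2
        exact h2.eventually_lt_const (by positivity)
      have hmemIoo : ∀ᶠ s in 𝓝[<] T, s ∈ Ioo a T := by
        filter_upwards [Ioo_mem_nhdsLT haT] with u hu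
        exact hu
      obtain ⟨s, hs1, hs2⟩ := (hev.and hmemIoo).exists
      have hPs := hPlow s hs2.1.le hs2.2
      have hRsle : R s ≤ R T := hRmono hs2.2.le
      have hτs : τ < s := lt_of_lt_of_le hτa hs2.1.le
      have h3 := hΦaddG ε (max ε (R s)) (max ε (R T)) hε (le_max_left _ _)
        (max_le_max le_rfl hRsle)
      have h4 : (∫ u in (max ε (R s))..(max ε (R T)), (ωt u)⁻¹) ≤ (R T - R s) / ωt ε := by
        refine (hchordG ε _ _ hε (le_max_left _ _) (max_le_max le_rfl hRsle)).trans ?_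
        exact div_le_div₀ (sub_nonneg.2 hRsle) (max_sub_max_le hRsle) hωε
          (hωtm (le_max_left _ _))
      have h5 : R T - R s ≤ ωt H * (G T - G s) := hRdiff s T hτs hs2.2.le
      have h6 : (R T - R s) / ωt ε ≤ K * (G T - G s) := by
        have h7 : (R T - R s) / ωt ε ≤ ωt H * (G T - G s) / ωt ε :=
          div_le_div₀ (mul_nonneg (hωtnn H) (sub_nonneg.2 (hGm hs2.2.le))) h5 hωε le_rfl
        calc (R T - R s) / ωt ε ≤ ωt H * (G T - G s) / ωt ε := h7
          _ = K * (G T - G s) := by rw [hK_def]; ring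
      have h8 : K * (G T - G s) ≤ K * (ρ / (K + 1)) := mul_le_mul_of_nonneg_left hs1.le hK0
      have h9 : K * (ρ / (K + 1)) ≤ ρ := by
        have hq : 0 ≤ ρ / (K + 1) := by positivity
        calc K * (ρ / (K + 1)) ≤ (K + 1) * (ρ / (K + 1)) :=
              mul_le_mul_of_nonneg_right (by linarith only []) hq
          _ = ρ := by field_simp
      have h10 : 2 * (G s - G a) ≤ 2 * (G T - G a) := by
        have := hGm hs2.2.le
        linarith
      calc (∫ u in ε..(max ε (R T)), (ωt u)⁻¹)
          = (∫ u in ε..(max ε (R s)), (ωt u)⁻¹) +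
            ∫ u in (max ε (R s))..(max ε (R T)), (ωt u)⁻¹ := h3
        _ ≤ 2 * (G s - G a) + (R T - R s) / ωt ε := add_le_add hPs h4
        _ ≤ 2 * (G T - G a) + ρ := by linarith [h6.trans (h8.trans h9)]
    have hTeq : T = t₁ := by
      by_contra hne
      have hTlt : T < t₁ := lt_of_le_of_ne hTt₁ hne
      have hTσ : T ≤ t₀ + σ := hTt₁.trans ht₁σ.le
      set L : ℝ := sInf (R '' Ioi T) with hL_def
      have hbddb : BddBelow (R '' Ioi T) := by
        refine ⟨R T, ?_⟩
        rintro b ⟨t, ht, rfl⟩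
        exact hRmono (le_of_lt ht)
      have hLne : (R '' Ioi T).Nonempty := ⟨R (T + 1), mem_image_of_mem _ (lt_add_one T)⟩
      have hRTL : R T ≤ L := le_csInf hLne (by rintro b ⟨t, ht, rfl⟩; exact hRmono ht.le)
      have hLle : ∀ t, T < t → L ≤ R t := fun t ht => csInf_le hbddb (mem_image_of_mem _ ht)
      have hdTR : d T ≤ R T := hdR T hτT hTσ
      have hLub : L ≤ R T + ωt (d T) * m T := by
        refine real_le_of_forall_pos_le_add fun η hη => ?_
        obtain ⟨a', h1, h2, h3⟩ := hshrink T (T + 1) η (lt_add_one T) hη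
        have h4 : L ≤ R a' := hLle a' h1
        rw [hRsplit T a' hτT h1] at h4
        linarith
      have hLlb : ∀ t, T < t → R t - L ≤ ∑ i, ∫ u in Ioo T t, ωt (d u) ∂(μ i) := by
        intro t ht
        have h4 : R T + ωt (d T) * m T ≤ L := by
          refine le_csInf hLne ?_
          rintro b ⟨t', ht', rfl⟩
          rw [hRsplit T t' hτT ht']
          have h5 : 0 ≤ ∑ i, ∫ u in Ioo T t', ωt (d u) ∂(μ i) :=
            Finset.sum_nonneg fun i _ =>
              setIntegral_nonneg measurableSet_Ioo fun u _ => hωtnn _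
          linarith
        rw [hRsplit T t hτT ht]
        linarith
      have htend : Tendsto (fun t => ωt (R t)) (𝓝[>] T) (𝓝 (ωt L)) := by
        have h1 : Tendsto R (𝓝[>] T) (𝓝 L) := hRmono.tendsto_nhdsGT T
        exact (hωtc.tendsto L).comp h1
      have hev2 : ∀ᶠ t in 𝓝[>] T, ωt (R t) < ωt L + ωt ε :=
        htend.eventually_lt_const (by linarith : ωt L < ωt L + ωt ε)
      obtain ⟨u, hu, husub⟩ := mem_nhdsGT_iff_exists_Ioc_subset.1 hev2
      set t' : ℝ := min u t₁ with ht'_def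
      have hTt' : T < t' := lt_min hu hTlt
      have hstep : ∀ s, T < s → s ≤ t' →
          (∫ v in ε..(max ε (R s)), (ωt v)⁻¹) ≤ 2 * (G s - G a) := by
        intro s hs1 hs2
        have hst₁ : s ≤ t₁ := hs2.trans (min_le_right _ _)
        have hsσ : s ≤ t₀ + σ := hst₁.trans ht₁σ.le
        have hωs : ωt (R s) < ωt L + ωt ε := husub ⟨hs1, hs2.trans (min_le_left _ _)⟩
        have hLRs : L ≤ R s := hLle s hs1
        have hA12 : max ε (R T) ≤ max ε L := max_le_max le_rfl hRTL
        have hA23 : max ε L ≤ max ε (R s) := max_le_max le_rfl hLRs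
        have hsplitΦ1 := hΦaddG ε (max ε L) (max ε (R s)) hε (le_max_left _ _) hA23
        have hsplitΦ2 := hΦaddG ε (max ε (R T)) (max ε L) hε (le_max_left _ _) hA12
        have hI12 : (∫ v in (max ε (R T))..(max ε L), (ωt v)⁻¹) ≤ m T := by
          refine (hchordG ε _ _ hε (le_max_left _ _) hA12).trans ?_
          have hnum : max ε L - max ε (R T) ≤ ωt (d T) * m T :=
            (max_sub_max_le hRTL).trans (by linarith [hLub])
          have hpos : 0 < ωt (max ε (R T)) := hωtpos ε _ hε (le_max_left _ _)
          rw [div_le_iff₀ hpos]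
          have hd2 : ωt (d T) ≤ ωt (max ε (R T)) := hωtm (hdTR.trans (le_max_right _ _))
          have hd3 : ωt (d T) * m T ≤ ωt (max ε (R T)) * m T :=
            mul_le_mul_of_nonneg_right hd2 (hm0 T)
          have hd4 := hm0 T
          nlinarith only [hnum, hd3, hd4]
        have hI23 : (∫ v in (max ε L)..(max ε (R s)), (ωt v)⁻¹) ≤
            2 * ((G s - G T) - m T) := by
          have hIooMs := hIooMeq T s hs1
          have hIoo0 : 0 ≤ (G s - G T) - m T := by
            rw [← hIooMs]
            exact hIooM0 T s
          have h7 : ∑ i, (∫ v in Ioo T s, ωt (d v) ∂(μ i)) ≤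
              ωt (R s) * ∑ i, ((μ i) (Ioo T s)).toReal := by
            rw [Finset.mul_sum]
            refine Finset.sum_le_sum fun i _ => ?_
            refine hboundC i _ T s Ioo_subset_Ico_self measurableSet_Ioo _ fun v hv => ?_
            exact hωtm ((hdR v (hτT.trans hv.1) (hv.2.le.trans hsσ)).trans (hRmono hv.2.le))
          have hnum : R s - L ≤ (ωt L + ωt ε) * ((G s - G T) - m T) := by
            have h8 := hLlb s hs1
            have h9 : ωt (R s) * ∑ i, ((μ i) (Ioo T s)).toReal ≤
                (ωt L + ωt ε) * ((G s - G T) - m T) := by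
              rw [← hIooMs]
              exact mul_le_mul_of_nonneg_right hωs.le (hIooM0 T s)
            linarith
          refine (hchordG ε _ _ hε (le_max_left _ _) hA23).trans ?_
          have hpos2 : 0 < ωt (max ε L) := hωtpos ε _ hε (le_max_left _ _)
          rw [div_le_iff₀ hpos2]
          have h10 : ωt L + ωt ε ≤ 2 * ωt (max ε L) := by
            have h11 := hωtm (le_max_left ε L)
            have h12 := hωtm (le_max_right ε L)
            linarith
          have h13 : max ε (R s) - max ε L ≤ R s - L := max_sub_max_le hLRs
          have h14 : (ωt L + ωt ε) * ((G s - G T) - m T) ≤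
              (2 * ωt (max ε L)) * ((G s - G T) - m T) :=
            mul_le_mul_of_nonneg_right h10 hIoo0
          nlinarith only [h13, hnum, h14]
        have hmT : m T ≤ G s - G T := hmle T s hs1
        calc (∫ v in ε..(max ε (R s)), (ωt v)⁻¹)
            = (∫ v in ε..(max ε L), (ωt v)⁻¹) +
              ∫ v in (max ε L)..(max ε (R s)), (ωt v)⁻¹ := hsplitΦ1
          _ = ((∫ v in ε..(max ε (R T)), (ωt v)⁻¹) +
                ∫ v in (max ε (R T))..(max ε L), (ωt v)⁻¹) +
              ∫ v in (max ε L)..(max ε (R s)), (ωt v)⁻¹ := by rw [← hsplitΦ2]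
          _ ≤ (2 * (G T - G a) + m T) + 2 * ((G s - G T) - m T) :=
              add_le_add (add_le_add hPT hI12) hI23
          _ ≤ 2 * (G s - G a) := by linarith [hm0 T]
      have ht'S : t' ∈ S := by
        refine ⟨⟨hTa.trans hTt'.le, min_le_right _ _⟩, fun s hs => ?_⟩
        rcases le_or_gt s T with h | h
        · rcases eq_or_lt_of_le h with h' | hlt
          · rw [h']
            exact hPT
          · exact hPlow s hs.1 hlt
        · exact hstep s h hs.2
      have hcon := le_csSup hSbdd ht'S
      rw [← hT_def] at hcon
      linarith
    have hfin2 : (∫ u in ε..(max ε (R t₁)), (ωt u)⁻¹) ≤ 2 * (G t₁ - G a) := hTeq ▸ hPT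
    rw [max_eq_right (le_trans hεd.le hdRt₁)] at hfin2
    refine hfin2.trans ?_
    have h1 : G t₁ ≤ G (t₀ + σ) := hGm ht₁σ.le
    have h2 : G t₀ ≤ G a := hGm (hτ1.trans hτa.le)
    linarith
  -- ### conclusion via the Osgood condition
  set C : ℝ := ∫ s in (R t₁)..u₀, (ωt s)⁻¹ with hC_def
  set B : ℝ := 2 * (G (t₀ + σ) - G t₀) with hB_def
  have hRt₁pos : 0 < R t₁ := lt_of_lt_of_le hdt₁ hdRt₁
  have hfinal : ∀ ε : ℝ, 0 < ε → ε < d t₁ → (∫ s in ε..u₀, 1 / ω s) ≤ B + C := by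
    intro ε hε hεd
    have hεR : ε ≤ R t₁ := (hεd.trans_le hdRt₁).le
    have hεu : ε ≤ u₀ := hεR.trans hRt₁u₀.le
    have hcongr : (∫ s in ε..u₀, 1 / ω s) = ∫ s in ε..u₀, (ωt s)⁻¹ := by
      apply intervalIntegral.integral_congr
      intro s hs
      rw [uIcc_of_le hεu] at hs
      show 1 / ω s = (ωt s)⁻¹
      rw [one_div, hωteq s (hε.le.trans hs.1)]
    rw [hcongr, hΦaddG ε (R t₁) u₀ hε hεR hRt₁u₀.le]
    have hk := key ε hε hεd
    rw [hB_def, hC_def]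
    linarith
  have h1 : ∀ᶠ ε in 𝓝[>] (0:ℝ), B + C < ∫ s in ε..u₀, 1 / ω s :=
    hOsgood.eventually_gt_atTop (B + C)
  have h2 : ∀ᶠ ε in 𝓝[>] (0:ℝ), ε ∈ Ioo (0:ℝ) (d t₁) := by
    filter_upwards [Ioo_mem_nhdsGT hdt₁] with z hz
    exact hz
  obtain ⟨ε, hε1, hε2⟩ := (h1.and h2).exists
  exact absurd (hfinal ε hε2.1 hε2.2) (not_le.2 hε1)

/-- Osgood uniqueness for systems of differential equations with several Stieltjes
derivatives: under the Osgood condition on `ω` and the `ω`-modulus condition on each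
`f_i`, the initial value problem has at most one solution on `I_σ`. -/
theorem stmt18 (n : ℕ) (g : Fin n → ℝ → ℝ)
    (hmono : ∀ i, Monotone (g i)) (hlc : ∀ i, LeftCont (g i))
    (μ : Fin n → Measure ℝ)
    (hμ : ∀ i, ∀ a b : ℝ, a ≤ b →
      μ i (Set.Ico a b) = ENNReal.ofReal (g i b - g i a))
    (t₀ σ : ℝ) (hσ : 0 < σ)
    (X : Set (Fin n → ℝ)) (x₀ : Fin n → ℝ) (hx₀ : x₀ ∈ X)
    (f : ℝ → (Fin n → ℝ) → Fin n → ℝ)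
    (ω : ℝ → ℝ) (hωc : ContinuousOn ω (Set.Ici 0)) (hωm : MonotoneOn ω (Set.Ici 0))
    (hω0 : ω 0 = 0) (hωpos : ∀ s : ℝ, 0 < s → 0 < ω s)
    (u₀ : ℝ) (hu₀ : 0 < u₀)
    (hOsgood : Tendsto (fun ε => ∫ s in ε..u₀, 1 / ω s)
      (nhdsWithin (0 : ℝ) (Set.Ioi 0)) atTop)
    (hlip : ∀ i : Fin n, ∀ᵐ t ∂(μ i).restrict (Set.Ico t₀ (t₀ + σ)),
      ∀ x ∈ X, ∀ y ∈ X, |f t x i - f t y i| ≤ ω ‖x - y‖) :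
    ∀ x y : ℝ → Fin n → ℝ,
      IsSolution n μ t₀ σ X x₀ f x → IsSolution n μ t₀ σ X x₀ f y →
      ∀ t ∈ Set.Icc t₀ (t₀ + σ), x t = y t := by
  intro x y hx hy
  obtain ⟨hx0, hxX, hx3⟩ := hx
  obtain ⟨hy0, hyX, hy3⟩ := hy
  choose yx hyxI hyxF hyxE using hx3
  choose yy hyyI hyyF hyyE using hy3
  exact stmt18' n g hmono hlc μ hμ t₀ σ hσ X x₀ hx₀ f ω hωc hωm hω0 hωpos u₀ hu₀ hOsgood hlip
    x y hx0 hxX hy0 hyX yx yy hyxI hyyI hyxF hyyF hyxE hyyE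
end
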